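/- arXiv:math/0605752 — 6 statements merged into one kernel-verified Lean document; each statement's English description precedes it below -/
import Mathlib

section
/- Let M : ℝ × ℝ → ℂ be an ℝ-linear map that is bijective (as a map between two-dimensional real vector spaces, identifying ℂ with ℝ²) and satisfies M(u, −u) = u for all u ∈ ℝ. Then there exist real numbers p and q with q ≠ 0 such that M(x, y) = (p·x + (p−1)·y) + i·q·(x + y) for all x, y ∈ ℝ. -/
theorem stmt2 (M : ℝ × ℝ →ₗ[ℝ] ℂ) (hbij : Function.Bijective M)
    (hglue : ∀ u : ℝ, M (u, -u) = (u : ℂ)) :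
    ∃ p q : ℝ, q ≠ 0 ∧
      ∀ x y : ℝ, M (x, y)
        = ((p * x + (p - 1) * y : ℝ) : ℂ) + Complex.I * ((q * (x + y) : ℝ) : ℂ) := by
  set a : ℂ := M (1, 0) with ha
  have hsub : M (1, 0) - M (0, 1) = 1 := by
    have := hglue 1
    rw [show ((1 : ℝ), (-1 : ℝ)) = (1, 0) - (0, 1) by norm_num, map_sub] at this
    simpa using this
  have hM : ∀ x y : ℝ, M (x, y) = x * a + y * (a - 1) := by
    intro x y
    have h1 : ((x : ℝ), (y : ℝ)) = x • ((1 : ℝ), (0 : ℝ)) + y • ((0 : ℝ), (1 : ℝ)) := by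
      simp [Prod.ext_iff]
    rw [h1, map_add, map_smul, map_smul]
    have hb : M (0, 1) = a - 1 := by rw [← hsub]; ring
    rw [hb, ← ha]
    simp [Complex.real_smul]
  refine ⟨a.re, a.im, ?_, ?_⟩
  · intro h0
    obtain ⟨⟨x, y⟩, hxy⟩ := hbij.2 Complex.I
    have him : (M (x, y)).im = 0 := by
      rw [hM]
      simp [h0]
    rw [hxy] at him
    simp at him
  · intro x y
    rw [hM]
    apply Complex.ext <;> simp <;> ring
end

section
/- Let a < b, α ∈ (0,1), and let f, g : [a,b] → ℝ be continuously differentiable functions whose left and right Riemann–Liouville derivatives of order α exist and are continuous on (a,b), with the products (ₐD_t^α f)·g and f·(ₜD_b^α g) integrable on [a,b]. If f(a) = f(b) = 0 (or g(a) = g(b) = 0), then ∫_a^b (ₐD_t^α f)(t)·g(t) dt = ∫_a^b f(t)·(ₜD_b^α g)(t) dt. -/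
/-!
Write `β = 1 - α`, `F(t) = ∫_a^t (t - s)^(-α) f(s) ds` and `G(s) = ∫_s^b (t - s)^(-α) g(t) dt`,
so that `Γ(β) ₐD_t^α f = F'` and `Γ(β) ₜD_b^α g = -G'`. Integrating by parts against the kernel,
`β F(t) = f(a) (t - a)^β + ∫_a^t (t - u)^β f'(u) du`, and symmetrically for `G`; in particular
`F` and `G` are continuous on `[a, b]` with `F(a) = G(b) = 0`. A second integration by parts in
`∫ F' g` and in `∫ f G'` turns both sides, multiplied by `Γ(β) β`, into the same boundary terms
plus the double integral of `(t - u)^β f'(u) g'(t)` over `a < u < t < b`, taken in the two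
possible orders. Fubini's theorem for the jointly continuous kernel `max (t - u) 0 ^ β`
identifies them.
-/

open MeasureTheory intervalIntegral

/-- Left Riemann–Liouville derivative of order `α ∈ (0,1)`:
`(ₐD_t^α x)(t) = (1/Γ(1−α)) (d/dt) ∫_a^t (t−s)^(−α) x(s) ds`. -/
noncomputable def RLl (a α : ℝ) (x : ℝ → ℝ) (t : ℝ) : ℝ :=
  (Real.Gamma (1 - α))⁻¹ * deriv (fun τ => ∫ s in a..τ, (τ - s) ^ (-α) * x s) t

/-- Right Riemann–Liouville derivative of order `α ∈ (0,1)`: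
`(ₜD_b^α x)(t) = −(1/Γ(1−α)) (d/dt) ∫_t^b (s−t)^(−α) x(s) ds`. -/
noncomputable def RLr (b α : ℝ) (x : ℝ → ℝ) (t : ℝ) : ℝ :=
  -((Real.Gamma (1 - α))⁻¹ * deriv (fun τ => ∫ s in τ..b, (s - τ) ^ (-α) * x s) t)

/-- Existence of the left Riemann–Liouville derivative on a set. -/
def RLlExists (a α : ℝ) (x : ℝ → ℝ) (s : Set ℝ) : Prop :=
  ∀ t ∈ s, DifferentiableAt ℝ (fun τ => ∫ u in a..τ, (τ - u) ^ (-α) * x u) t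

/-- Existence of the right Riemann–Liouville derivative on a set. -/
def RLrExists (b α : ℝ) (x : ℝ → ℝ) (s : Set ℝ) : Prop :=
  ∀ t ∈ s, DifferentiableAt ℝ (fun τ => ∫ u in τ..b, (u - τ) ^ (-α) * x u) t

open Set

theorem ContDiffOn.exists_continuous_hasDerivAt {a b : ℝ} (hab : a < b) {f : ℝ → ℝ}
    (hf : ContDiffOn ℝ 1 f (Icc a b)) :
    ∃ φ : ℝ → ℝ, Continuous φ ∧ ∀ x ∈ Ioo a b, HasDerivAt f (φ x) x := by
  refine ⟨fun x => derivWithin f (Icc a b) (projIcc a b hab.le x), ?_, fun x hx => ?_⟩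
  · exact (hf.continuousOn_derivWithin (uniqueDiffOn_Icc hab) le_rfl).comp_continuous
      (continuous_subtype_val.comp continuous_projIcc) fun x => (projIcc a b hab.le x).2
  · have hmem : Icc a b ∈ nhds x := Icc_mem_nhds hx.1 hx.2
    dsimp only
    rw [projIcc_of_mem hab.le (Ioo_subset_Icc_self hx), derivWithin_of_mem_nhds hmem]
    exact ((hf.differentiableOn one_ne_zero x (Ioo_subset_Icc_self hx)).differentiableAt
      hmem).hasDerivAt

theorem intervalIntegral.integral_deriv_mul_eq_sub_integral_mul_deriv {a b : ℝ} (hab : a ≤ b)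
    {u v u' v' : ℝ → ℝ} (hu : ContinuousOn u (Icc a b)) (hv : ContinuousOn v (Icc a b))
    (huu' : ∀ x ∈ Ioo a b, HasDerivAt u (u' x) x) (hvv' : ∀ x ∈ Ioo a b, HasDerivAt v (v' x) x)
    (hu'v : IntervalIntegrable (fun x => u' x * v x) volume a b)
    (huv' : IntervalIntegrable (fun x => u x * v' x) volume a b) :
    ∫ x in a..b, u' x * v x = u b * v b - u a * v a - ∫ x in a..b, u x * v' x := by
  have ftc := integral_eq_sub_of_hasDerivAt_of_le hab (hu.mul hv)
    (fun x hx => (huu' x hx).mul (hvv' x hx)) (hu'v.add huv')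
  rw [integral_add hu'v huv'] at ftc
  simp only [Pi.mul_apply] at ftc
  linarith

/- `leftPowerIntegral a β h` and `rightPowerIntegral b β h` are `Γ(β + 1)` times the left and
right Riemann–Liouville integrals of `h` of order `β + 1`. -/
noncomputable def leftPowerIntegral (a β : ℝ) (h : ℝ → ℝ) (t : ℝ) : ℝ :=
  ∫ u in a..t, (t - u) ^ β * h u

noncomputable def rightPowerIntegral (b β : ℝ) (h : ℝ → ℝ) (s : ℝ) : ℝ :=
  ∫ t in s..b, (t - s) ^ β * h t

theorem RLl_apply (a α : ℝ) (f : ℝ → ℝ) (t : ℝ) :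
    RLl a α f t = (Real.Gamma (1 - α))⁻¹ * deriv (leftPowerIntegral a (-α) f) t :=
  rfl

theorem RLr_apply (b α : ℝ) (f : ℝ → ℝ) (t : ℝ) :
    RLr b α f t = -((Real.Gamma (1 - α))⁻¹ * deriv (rightPowerIntegral b (-α) f) t) :=
  rfl

theorem RLlExists.hasDerivAt {a α : ℝ} {f : ℝ → ℝ} {s : Set ℝ} (h : RLlExists a α f s) {t : ℝ}
    (ht : t ∈ s) :
    HasDerivAt (leftPowerIntegral a (-α) f) (deriv (leftPowerIntegral a (-α) f) t) t :=
  (h t ht).hasDerivAt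

theorem RLrExists.hasDerivAt {b α : ℝ} {f : ℝ → ℝ} {s : Set ℝ} (h : RLrExists b α f s) {t : ℝ}
    (ht : t ∈ s) :
    HasDerivAt (rightPowerIntegral b (-α) f) (deriv (rightPowerIntegral b (-α) f) t) t :=
  (h t ht).hasDerivAt

section PowerIntegral

variable {a b β : ℝ} {h : ℝ → ℝ}

theorem continuous_leftPowerIntegral (hβ : 0 ≤ β) (hh : Continuous h) :
    Continuous (leftPowerIntegral a β h) := by
  have := Real.continuous_rpow_const hβ
  unfold leftPowerIntegral
  fun_prop

theorem continuous_rightPowerIntegral (hβ : 0 ≤ β) (hh : Continuous h) :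
    Continuous (rightPowerIntegral b β h) := by
  have := Real.continuous_rpow_const hβ
  unfold rightPowerIntegral
  simp_rw [integral_symm b]
  fun_prop

theorem leftPowerIntegral_eq_integral_max (hβ : 0 < β) (hh : Continuous h) {t : ℝ}
    (ht : t ∈ Icc a b) :
    leftPowerIntegral a β h t = ∫ u in a..b, max (t - u) 0 ^ β * h u := by
  have := Real.continuous_rpow_const hβ.le
  have hc : Continuous fun u => max (t - u) 0 ^ β * h u := by fun_prop
  rw [← integral_add_adjacent_intervals (hc.intervalIntegrable a t) (hc.intervalIntegrable t b)]
  have hzero : ∫ u in t..b, max (t - u) 0 ^ β * h u = 0 := by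
    rw [← intervalIntegral.integral_zero (a := t) (b := b) (μ := volume)]
    refine integral_congr fun u hu => ?_
    rw [uIcc_of_le ht.2] at hu
    simp [max_eq_right (sub_nonpos.2 hu.1), Real.zero_rpow hβ.ne']
  rw [hzero, add_zero]
  refine integral_congr fun u hu => ?_
  rw [uIcc_of_le ht.1] at hu
  simp [max_eq_left (sub_nonneg.2 hu.2)]

theorem rightPowerIntegral_eq_integral_max (hβ : 0 < β) (hh : Continuous h) {s : ℝ}
    (hs : s ∈ Icc a b) :
    rightPowerIntegral b β h s = ∫ t in a..b, max (t - s) 0 ^ β * h t := by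
  have := Real.continuous_rpow_const hβ.le
  have hc : Continuous fun t => max (t - s) 0 ^ β * h t := by fun_prop
  rw [← integral_add_adjacent_intervals (hc.intervalIntegrable a s) (hc.intervalIntegrable s b)]
  have hzero : ∫ t in a..s, max (t - s) 0 ^ β * h t = 0 := by
    rw [← intervalIntegral.integral_zero (a := a) (b := s) (μ := volume)]
    refine integral_congr fun t ht => ?_
    rw [uIcc_of_le hs.1] at ht
    simp [max_eq_right (sub_nonpos.2 ht.2), Real.zero_rpow hβ.ne']
  rw [hzero, zero_add]
  refine integral_congr fun t ht => ?_
  rw [uIcc_of_le hs.2] at ht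
  simp [max_eq_left (sub_nonneg.2 ht.1)]

theorem integral_leftPowerIntegral_mul (hβ : 0 < β) (hab : a ≤ b) {φ γ : ℝ → ℝ}
    (hφ : Continuous φ) (hγ : Continuous γ) :
    ∫ t in a..b, leftPowerIntegral a β φ t * γ t
      = ∫ u in a..b, φ u * rightPowerIntegral b β γ u := by
  have := Real.continuous_rpow_const hβ.le
  have hK : Continuous fun p : ℝ × ℝ => max (p.1 - p.2) 0 ^ β * φ p.2 * γ p.1 := by fun_prop
  calc ∫ t in a..b, leftPowerIntegral a β φ t * γ t
      = ∫ t in a..b, ∫ u in a..b, max (t - u) 0 ^ β * φ u * γ t := by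
        refine integral_congr fun t ht => ?_
        rw [uIcc_of_le hab] at ht
        rw [leftPowerIntegral_eq_integral_max hβ hφ ht, ← intervalIntegral.integral_mul_const]
    _ = ∫ u in a..b, ∫ t in a..b, max (t - u) 0 ^ β * φ u * γ t :=
        intervalIntegral_intervalIntegral_swap <|
          (hK.continuousOn.integrableOn_compact (isCompact_uIcc.prod isCompact_uIcc)).mono_set
            (prod_mono uIoc_subset_uIcc uIoc_subset_uIcc)
    _ = ∫ u in a..b, φ u * rightPowerIntegral b β γ u := by
        refine integral_congr fun u hu => ?_
        rw [uIcc_of_le hab] at hu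
        rw [rightPowerIntegral_eq_integral_max hβ hγ hu, ← intervalIntegral.integral_const_mul]
        exact integral_congr fun t _ => by ring

end PowerIntegral

section RiemannLiouville

variable {a b α : ℝ} {f g φ γ : ℝ → ℝ}

theorem one_sub_mul_leftPowerIntegral_neg (hα : α < 1)
    (hf : ContinuousOn f (Icc a b)) (hf' : ∀ x ∈ Ioo a b, HasDerivAt f (φ x) x)
    (hφ : IntervalIntegrable φ volume a b) {t : ℝ} (ht : t ∈ Icc a b) :
    (1 - α) * leftPowerIntegral a (-α) f t
      = f a * (t - a) ^ (1 - α) + leftPowerIntegral a (1 - α) φ t := by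
  have hat := ht.1
  replace hf := hf.mono (Icc_subset_Icc_right ht.2)
  replace hf' := fun s (hs : s ∈ Ioo a t) => hf' s ⟨hs.1, hs.2.trans_le ht.2⟩
  replace hφ := hφ.mono_set (uIcc_subset_uIcc left_mem_uIcc (mem_uIcc_of_le ht.1 ht.2))
  have hβ : 0 < 1 - α := by linarith
  have hv : ∀ s ∈ Ioo a t,
      HasDerivAt (fun s => -(t - s) ^ (1 - α)) ((1 - α) * (t - s) ^ (-α)) s := by
    intro s hs
    refine (((hasDerivAt_id' s).const_sub t).rpow_const (p := 1 - α)
      (Or.inl (sub_ne_zero.2 hs.2.ne'))).neg.congr_deriv ?_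
    rw [show 1 - α - 1 = -α by ring]
    ring
  have hv' : IntervalIntegrable (fun s => (1 - α) * (t - s) ^ (-α)) volume a t := by
    refine IntervalIntegrable.const_mul ?_ _
    simpa using
      (intervalIntegrable_rpow' (a := t - a) (b := 0) (r := -α) (by linarith)).comp_sub_left t
  have := Real.continuous_rpow_const hβ.le
  have ibp := integral_mul_deriv_eq_deriv_mul_of_hasDerivAt (u := f) (u' := φ)
    (v := fun s => -(t - s) ^ (1 - α)) (by rwa [uIcc_of_le hat]) (by fun_prop)
    (by simpa [hat] using hf') (by simpa [hat] using hv) hφ hv'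
  simp only [sub_self, Real.zero_rpow hβ.ne', neg_zero, mul_zero, zero_sub] at ibp
  unfold leftPowerIntegral
  rw [← intervalIntegral.integral_const_mul]
  calc _ = ∫ s in a..t, f s * ((1 - α) * (t - s) ^ (-α)) := integral_congr fun s _ => by ring
    _ = _ := ibp
    _ = _ := by
      rw [sub_eq_add_neg, ← intervalIntegral.integral_neg]
      exact congr_arg₂ (· + ·) (by ring) (integral_congr fun s _ => by ring)

theorem one_sub_mul_rightPowerIntegral_neg (hα : α < 1)
    (hf : ContinuousOn f (Icc a b)) (hf' : ∀ x ∈ Ioo a b, HasDerivAt f (φ x) x)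
    (hφ : IntervalIntegrable φ volume a b) {s : ℝ} (hs : s ∈ Icc a b) :
    (1 - α) * rightPowerIntegral b (-α) f s
      = f b * (b - s) ^ (1 - α) - rightPowerIntegral b (1 - α) φ s := by
  have hsb := hs.2
  replace hf := hf.mono (Icc_subset_Icc_left hs.1)
  replace hf' := fun t (ht : t ∈ Ioo s b) => hf' t ⟨hs.1.trans_lt ht.1, ht.2⟩
  replace hφ := hφ.mono_set (uIcc_subset_uIcc (mem_uIcc_of_le hs.1 hs.2) right_mem_uIcc)
  have hβ : 0 < 1 - α := by linarith
  have hv : ∀ t ∈ Ioo s b,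
      HasDerivAt (fun t => (t - s) ^ (1 - α)) ((1 - α) * (t - s) ^ (-α)) t := by
    intro t ht
    refine (((hasDerivAt_id' t).sub_const s).rpow_const (p := 1 - α)
      (Or.inl (sub_ne_zero.2 ht.1.ne'))).congr_deriv ?_
    rw [show 1 - α - 1 = -α by ring]
    ring
  have hv' : IntervalIntegrable (fun t => (1 - α) * (t - s) ^ (-α)) volume s b := by
    refine IntervalIntegrable.const_mul ?_ _
    simpa using
      (intervalIntegrable_rpow' (a := 0) (b := b - s) (r := -α) (by linarith)).comp_sub_right s
  have := Real.continuous_rpow_const hβ.le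
  have ibp := integral_mul_deriv_eq_deriv_mul_of_hasDerivAt (u := f) (u' := φ)
    (v := fun t => (t - s) ^ (1 - α)) (by rwa [uIcc_of_le hsb]) (by fun_prop)
    (by simpa [hsb] using hf') (by simpa [hsb] using hv) hφ hv'
  simp only [sub_self, Real.zero_rpow hβ.ne', mul_zero, sub_zero] at ibp
  unfold rightPowerIntegral
  rw [← intervalIntegral.integral_const_mul]
  calc _ = ∫ t in s..b, f t * ((1 - α) * (t - s) ^ (-α)) := integral_congr fun t _ => by ring
    _ = _ := ibp
    _ = _ := congr_arg₂ (· - ·) rfl (integral_congr fun t _ => by ring)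

theorem continuousOn_leftPowerIntegral_neg (hα : α < 1) (hf : ContinuousOn f (Icc a b))
    (hφ : Continuous φ) (hf' : ∀ x ∈ Ioo a b, HasDerivAt f (φ x) x) :
    ContinuousOn (leftPowerIntegral a (-α) f) (Icc a b) := by
  have hβ : 0 < 1 - α := by linarith
  have := Real.continuous_rpow_const hβ.le
  have := continuous_leftPowerIntegral (a := a) hβ.le hφ
  refine ContinuousOn.congr (f := fun t =>
    (f a * (t - a) ^ (1 - α) + leftPowerIntegral a (1 - α) φ t) / (1 - α)) (by fun_prop)
    fun t ht => ?_
  dsimp only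
  rw [eq_div_iff hβ.ne', mul_comm]
  exact one_sub_mul_leftPowerIntegral_neg hα hf hf' (hφ.intervalIntegrable a b) ht

theorem continuousOn_rightPowerIntegral_neg (hα : α < 1) (hf : ContinuousOn f (Icc a b))
    (hφ : Continuous φ) (hf' : ∀ x ∈ Ioo a b, HasDerivAt f (φ x) x) :
    ContinuousOn (rightPowerIntegral b (-α) f) (Icc a b) := by
  have hβ : 0 < 1 - α := by linarith
  have := Real.continuous_rpow_const hβ.le
  have := continuous_rightPowerIntegral (b := b) hβ.le hφ
  refine ContinuousOn.congr (f := fun s =>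
    (f b * (b - s) ^ (1 - α) - rightPowerIntegral b (1 - α) φ s) / (1 - α)) (by fun_prop)
    fun s hs => ?_
  dsimp only
  rw [eq_div_iff hβ.ne', mul_comm]
  exact one_sub_mul_rightPowerIntegral_neg hα hf hf' (hφ.intervalIntegrable a b) hs

theorem Gamma_mul_one_sub_mul_integral_RLl_mul (hα : α < 1) (hab : a ≤ b)
    (hf : ContinuousOn f (Icc a b)) (hφ : Continuous φ)
    (hf' : ∀ x ∈ Ioo a b, HasDerivAt f (φ x) x)
    (hg : ContinuousOn g (Icc a b)) (hγ : Continuous γ)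
    (hg' : ∀ x ∈ Ioo a b, HasDerivAt g (γ x) x)
    (hfl : RLlExists a α f (Ioo a b))
    (hint : IntervalIntegrable (fun t => RLl a α f t * g t) volume a b) :
    Real.Gamma (1 - α) * (1 - α) * ∫ t in a..b, RLl a α f t * g t
      = f a * g b * (b - a) ^ (1 - α) + g b * leftPowerIntegral a (1 - α) φ b
        - f a * rightPowerIntegral b (1 - α) γ a
        - ∫ t in a..b, leftPowerIntegral a (1 - α) φ t * γ t := by
  have hΓ : Real.Gamma (1 - α) ≠ 0 := (Real.Gamma_pos_of_pos (by linarith)).ne'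
  have hRLl : ∀ t, Real.Gamma (1 - α) * (RLl a α f t * g t)
      = deriv (leftPowerIntegral a (-α) f) t * g t := fun t => by
    rw [RLl_apply, ← mul_assoc, ← mul_assoc, mul_inv_cancel₀ hΓ, one_mul]
  have hF'g : IntervalIntegrable (fun t => deriv (leftPowerIntegral a (-α) f) t * g t)
      volume a b := by
    simpa only [hRLl] using hint.const_mul (Real.Gamma (1 - α))
  have hFc := continuousOn_leftPowerIntegral_neg hα hf hφ hf'
  have ibp := integral_deriv_mul_eq_sub_integral_mul_deriv hab hFc hg
    (fun t ht => hfl.hasDerivAt ht) hg' hF'g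
    ((hFc.mul hγ.continuousOn).intervalIntegrable_of_Icc hab)
  have hFa : leftPowerIntegral a (-α) f a = 0 := integral_same
  have hFb := one_sub_mul_leftPowerIntegral_neg hα hf hf' (hφ.intervalIntegrable a b)
    (right_mem_Icc.2 hab)
  have hFγ : (1 - α) * ∫ t in a..b, leftPowerIntegral a (-α) f t * γ t
      = f a * rightPowerIntegral b (1 - α) γ a
        + ∫ t in a..b, leftPowerIntegral a (1 - α) φ t * γ t := by
    have := Real.continuous_rpow_const (show 0 ≤ 1 - α by linarith)
    have := continuous_leftPowerIntegral (a := a) (show 0 ≤ 1 - α by linarith) hφ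
    rw [rightPowerIntegral, ← intervalIntegral.integral_const_mul,
      ← intervalIntegral.integral_const_mul,
      ← intervalIntegral.integral_add ((by fun_prop : Continuous _).intervalIntegrable a b)
        ((by fun_prop : Continuous _).intervalIntegrable a b)]
    refine integral_congr fun t ht => ?_
    rw [uIcc_of_le hab] at ht
    simp only [← mul_assoc, one_sub_mul_leftPowerIntegral_neg hα hf hf'
      (hφ.intervalIntegrable a b) ht]
    ring
  rw [mul_comm (Real.Gamma _), mul_assoc, ← intervalIntegral.integral_const_mul]
  simp only [hRLl]
  rw [ibp, hFa]
  linear_combination g b * hFb - hFγ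

theorem Gamma_mul_one_sub_mul_integral_mul_RLr (hα : α < 1) (hab : a ≤ b)
    (hf : ContinuousOn f (Icc a b)) (hφ : Continuous φ)
    (hf' : ∀ x ∈ Ioo a b, HasDerivAt f (φ x) x)
    (hg : ContinuousOn g (Icc a b)) (hγ : Continuous γ)
    (hg' : ∀ x ∈ Ioo a b, HasDerivAt g (γ x) x)
    (hgr : RLrExists b α g (Ioo a b))
    (hint : IntervalIntegrable (fun t => f t * RLr b α g t) volume a b) :
    Real.Gamma (1 - α) * (1 - α) * ∫ t in a..b, f t * RLr b α g t
      = f a * g b * (b - a) ^ (1 - α) + g b * leftPowerIntegral a (1 - α) φ b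
        - f a * rightPowerIntegral b (1 - α) γ a
        - ∫ u in a..b, φ u * rightPowerIntegral b (1 - α) γ u := by
  have hΓ : Real.Gamma (1 - α) ≠ 0 := (Real.Gamma_pos_of_pos (by linarith)).ne'
  have hRLr : ∀ t, Real.Gamma (1 - α) * (f t * RLr b α g t)
      = -(f t * deriv (rightPowerIntegral b (-α) g) t) := fun t => by
    rw [RLr_apply]
    field_simp
  have hfG' : IntervalIntegrable (fun t => f t * deriv (rightPowerIntegral b (-α) g) t)
      volume a b := by
    simpa only [hRLr, Pi.neg_def, neg_neg] using (hint.const_mul (Real.Gamma (1 - α))).neg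
  have hGc := continuousOn_rightPowerIntegral_neg hα hg hγ hg'
  have ibp := integral_deriv_mul_eq_sub_integral_mul_deriv hab hf hGc hf'
    (fun t ht => hgr.hasDerivAt ht) ((hφ.continuousOn.mul hGc).intervalIntegrable_of_Icc hab)
    hfG'
  have hGb : rightPowerIntegral b (-α) g b = 0 := integral_same
  have hGa := one_sub_mul_rightPowerIntegral_neg hα hg hg' (hγ.intervalIntegrable a b)
    (left_mem_Icc.2 hab)
  have hφG : (1 - α) * ∫ u in a..b, φ u * rightPowerIntegral b (-α) g u
      = g b * leftPowerIntegral a (1 - α) φ b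
        - ∫ u in a..b, φ u * rightPowerIntegral b (1 - α) γ u := by
    have := Real.continuous_rpow_const (show 0 ≤ 1 - α by linarith)
    have := continuous_rightPowerIntegral (b := b) (show 0 ≤ 1 - α by linarith) hγ
    rw [leftPowerIntegral, ← intervalIntegral.integral_const_mul,
      ← intervalIntegral.integral_const_mul,
      ← intervalIntegral.integral_sub ((by fun_prop : Continuous _).intervalIntegrable a b)
        ((by fun_prop : Continuous _).intervalIntegrable a b)]
    refine integral_congr fun u hu => ?_
    rw [uIcc_of_le hab] at hu
    simp only [mul_left_comm (1 - α), one_sub_mul_rightPowerIntegral_neg hα hg hg'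
      (hγ.intervalIntegrable a b) hu]
    ring
  rw [hGb] at ibp
  rw [mul_comm (Real.Gamma _), mul_assoc, ← intervalIntegral.integral_const_mul]
  simp only [hRLr, intervalIntegral.integral_neg]
  linear_combination -(1 - α) * ibp + f a * hGa + hφG

end RiemannLiouville

theorem stmt4_general {a b : ℝ} (hab : a < b) {α : ℝ} (hα : α ∈ Set.Ioo (0 : ℝ) 1)
    (f g : ℝ → ℝ)
    (hf : ContDiffOn ℝ 1 f (Set.Icc a b)) (hg : ContDiffOn ℝ 1 g (Set.Icc a b))
    (hfl : RLlExists a α f (Set.Ioo a b)) (hgr : RLrExists b α g (Set.Ioo a b))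
    (hint1 : IntervalIntegrable (fun t => RLl a α f t * g t) volume a b)
    (hint2 : IntervalIntegrable (fun t => f t * RLr b α g t) volume a b) :
    ∫ t in a..b, RLl a α f t * g t = ∫ t in a..b, f t * RLr b α g t := by
  obtain ⟨φ, hφ, hf'⟩ := hf.exists_continuous_hasDerivAt hab
  obtain ⟨γ, hγ, hg'⟩ := hg.exists_continuous_hasDerivAt hab
  have hβ : 0 < 1 - α := by linarith [hα.2]
  refine mul_left_cancel₀ (mul_ne_zero (Real.Gamma_pos_of_pos hβ).ne' hβ.ne') ?_
  rw [Gamma_mul_one_sub_mul_integral_RLl_mul hα.2 hab.le hf.continuousOn hφ hf'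
      hg.continuousOn hγ hg' hfl hint1,
    Gamma_mul_one_sub_mul_integral_mul_RLr hα.2 hab.le hf.continuousOn hφ hf'
      hg.continuousOn hγ hg' hgr hint2,
    integral_leftPowerIntegral_mul hβ hab.le hφ hγ]

theorem stmt4 {a b : ℝ} (hab : a < b) {α : ℝ} (hα : α ∈ Set.Ioo (0 : ℝ) 1)
    (f g : ℝ → ℝ)
    (hf : ContDiffOn ℝ 1 f (Set.Icc a b)) (hg : ContDiffOn ℝ 1 g (Set.Icc a b))
    (hfl : RLlExists a α f (Set.Ioo a b)) (hfr : RLrExists b α f (Set.Ioo a b))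
    (hgl : RLlExists a α g (Set.Ioo a b)) (hgr : RLrExists b α g (Set.Ioo a b))
    (hflc : ContinuousOn (RLl a α f) (Set.Ioo a b))
    (hfrc : ContinuousOn (RLr b α f) (Set.Ioo a b))
    (hglc : ContinuousOn (RLl a α g) (Set.Ioo a b))
    (hgrc : ContinuousOn (RLr b α g) (Set.Ioo a b))
    (hint1 : IntervalIntegrable (fun t => RLl a α f t * g t) volume a b)
    (hint2 : IntervalIntegrable (fun t => f t * RLr b α g t) volume a b)
    (hbc : (f a = 0 ∧ f b = 0) ∨ (g a = 0 ∧ g b = 0)) :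
    ∫ t in a..b, RLl a α f t * g t = ∫ t in a..b, f t * RLr b α g t :=
  stmt4_general hab hα f g hf hg hfl hgr hint1 hint2
end

section
/- Let a < b, α, β ∈ (0,1), μ ∈ ℂ, and let f, g : [a,b] → ℝ be continuously differentiable functions whose left and right Riemann–Liouville derivatives of orders α and β exist and are continuous on (a,b), with all relevant products integrable. If f(a) = f(b) = 0 (or g(a) = g(b) = 0), then ∫_a^b (D^{α,β}_μ f)(t)·g(t) dt = −∫_a^b f(t)·(D^{β,α}_{−μ} g)(t) dt. -/
open MeasureTheory intervalIntegral Set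

/-- Left Riemann–Liouville derivative of order `α ∈ (0,1)` of a complex-valued function:
`(ₐD_t^α x)(t) = (1/Γ(1−α)) (d/dt) ∫_a^t (t−s)^(−α) x(s) ds`. -/
noncomputable def RLlC (a α : ℝ) (x : ℝ → ℂ) (t : ℝ) : ℂ :=
  (Real.Gamma (1 - α))⁻¹ • deriv (fun τ => ∫ s in a..τ, ((τ - s) ^ (-α) : ℝ) • x s) t

/-- Right Riemann–Liouville derivative of order `α ∈ (0,1)` of a complex-valued function:
`(ₜD_b^α x)(t) = −(1/Γ(1−α)) (d/dt) ∫_t^b (s−t)^(−α) x(s) ds`. -/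
noncomputable def RLrC (b α : ℝ) (x : ℝ → ℂ) (t : ℝ) : ℂ :=
  -((Real.Gamma (1 - α))⁻¹ • deriv (fun τ => ∫ s in τ..b, ((s - τ) ^ (-α) : ℝ) • x s) t)

/-- The fractional operator of order `(α,β)` with parameter `μ`:
`D^{α,β}_μ x = (1/2)(ₐD_t^α x − ₜD_b^β x) + (iμ/2)(ₐD_t^α x + ₜD_b^β x)`. -/
noncomputable def Dfrac (a b α β : ℝ) (μ : ℂ) (x : ℝ → ℂ) : ℝ → ℂ := fun t =>
  (1 / 2 : ℂ) * (RLlC a α x t - RLrC b β x t)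
    + Complex.I * μ / 2 * (RLlC a α x t + RLrC b β x t)

/-- Existence of the left RL derivative of order `α` and of the right RL derivative of
order `β` on `(a,b)`. -/
def HasRLpair (a b α β : ℝ) (x : ℝ → ℂ) : Prop :=
  (∀ t ∈ Set.Ioo a b,
    DifferentiableAt ℝ (fun τ => ∫ s in a..τ, ((τ - s) ^ (-α) : ℝ) • x s) t) ∧
  (∀ t ∈ Set.Ioo a b,
    DifferentiableAt ℝ (fun τ => ∫ s in τ..b, ((s - τ) ^ (-β) : ℝ) • x s) t)

/-- The fractional operator applied componentwise to a real vector-valued function. -/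
noncomputable def DfracV {d : ℕ} (a b α β : ℝ) (μ : ℂ) (x : ℝ → Fin d → ℝ)
    (t : ℝ) (i : Fin d) : ℂ :=
  Dfrac a b α β μ (fun s => ((x s i : ℝ) : ℂ)) t

/-!
Write `Lₐ p (t) = ∫ₐᵗ (t - s)^(-γ) p(s) ds` and `R_b q (t) = ∫ₜᵇ (s - t)^(-γ) q(s) ds`
(`leftFracInt`, `rightFracInt`), so that `ₐD_t^γ p = Γ(1-γ)⁻¹ (Lₐ p)'` and
`ₜD_b^γ q = -Γ(1-γ)⁻¹ (R_b q)'`. For `C¹` functions `p, q`,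
Fubini on the triangle `a ≤ s ≤ t ≤ b`, followed by the fundamental theorem of calculus along each
line `t - s = u`, gives `∫ₐᵇ (Lₐ p · q' + p' · R_b q) = [Lₐ p · q + p · R_b q]ₐᵇ`. Hence
`Lₐ p · q + p · R_b q - ∫ₐᵗ (Lₐ p · q' + p' · R_b q)` is a primitive of `(Lₐ p)' q + p (R_b q)'`
taking the same value at `a` and `b`.

Since `D^{α,β}_μ x = c₊ ₐD_t^α x - c₋ ₜD_b^β x` with `c± = (1 ± iμ)/2`, the integrand
`(D^{α,β}_μ f) g + f (D^{β,α}_{-μ} g)` equals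
`c₊ (ₐD_t^α f · g - f · ₜD_b^α g) + c₋ (ₐD_t^β g · f - g · ₜD_b^β f)`, the derivative of a
function taking the same value at `a` and `b`; so its integral vanishes.
-/

lemma differentiableAt_ofReal_comp_iff {h : ℝ → ℝ} {t : ℝ} :
    DifferentiableAt ℝ (fun τ => (h τ : ℂ)) t ↔ DifferentiableAt ℝ h t := by
  refine ⟨fun hd => ?_, fun hd => hd.hasDerivAt.ofReal_comp.differentiableAt⟩
  have hre := Complex.reCLM.differentiableAt.comp t hd
  simp only [Function.comp_def, Complex.reCLM_apply, Complex.ofReal_re] at hre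
  exact hre

lemma deriv_ofReal_comp (h : ℝ → ℝ) (t : ℝ) :
    deriv (fun τ => (h τ : ℂ)) t = deriv h t := by
  by_cases hd : DifferentiableAt ℝ h t
  · exact hd.hasDerivAt.ofReal_comp.deriv
  · rw [deriv_zero_of_not_differentiableAt hd,
      deriv_zero_of_not_differentiableAt (differentiableAt_ofReal_comp_iff.not.2 hd),
      Complex.ofReal_zero]

lemma exists_continuous_extension_of_contDiffOn {a b : ℝ} (hab : a < b) {f : ℝ → ℝ}
    (hf : ContDiffOn ℝ 1 f (Icc a b)) :
    ∃ F F' : ℝ → ℝ, Continuous F ∧ Continuous F' ∧ EqOn f F (Icc a b) ∧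
      ∀ t ∈ Ioo a b, HasDerivAt F (F' t) t := by
  have hproj : Continuous fun t => (projIcc a b hab.le t : ℝ) :=
    continuous_subtype_val.comp continuous_projIcc
  have hmem (t : ℝ) : (projIcc a b hab.le t : ℝ) ∈ Icc a b := (projIcc a b hab.le t).2
  refine ⟨fun t => f (projIcc a b hab.le t),
    fun t => derivWithin f (Icc a b) (projIcc a b hab.le t),
    hf.continuousOn.comp_continuous hproj hmem,
    (hf.continuousOn_derivWithin (uniqueDiffOn_Icc hab) le_rfl).comp_continuous hproj hmem,
    fun t ht => by simp [projIcc_of_mem hab.le ht], fun t ht => ?_⟩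
  have hnhds : Icc a b ∈ nhds t := Icc_mem_nhds ht.1 ht.2
  have hft : HasDerivAt f (derivWithin f (Icc a b) t) t := by
    rw [derivWithin_of_mem_nhds hnhds]
    exact ((hf.contDiffAt hnhds).differentiableAt one_ne_zero).hasDerivAt
  simp only [projIcc_of_mem hab.le (Ioo_subset_Icc_self ht)]
  refine hft.congr_of_eventuallyEq ?_
  filter_upwards [hnhds] with τ hτ
  simp [projIcc_of_mem hab.le hτ]

noncomputable def leftFracInt (a γ : ℝ) (p : ℝ → ℝ) (t : ℝ) : ℝ :=
  ∫ s in a..t, (t - s) ^ (-γ) * p s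

noncomputable def rightFracInt (b γ : ℝ) (q : ℝ → ℝ) (t : ℝ) : ℝ :=
  ∫ s in t..b, (s - t) ^ (-γ) * q s

section FractionalIntegral

variable {a b γ t : ℝ} {p q r p' q' : ℝ → ℝ}

@[simp] lemma leftFracInt_self : leftFracInt a γ p a = 0 :=
  integral_same

@[simp] lemma rightFracInt_self : rightFracInt b γ q b = 0 :=
  integral_same

lemma leftFracInt_eq_integral_comp_sub :
    leftFracInt a γ p t = ∫ u in (0 : ℝ)..(t - a), u ^ (-γ) * p (t - u) := by
  rw [leftFracInt]
  simpa using (integral_comp_sub_left (fun u => u ^ (-γ) * p (t - u)) t (a := a) (b := t))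

lemma rightFracInt_eq_integral_comp_add :
    rightFracInt b γ q t = ∫ u in (0 : ℝ)..(b - t), u ^ (-γ) * q (t + u) := by
  rw [rightFracInt]
  simpa using (integral_comp_sub_right (fun u => u ^ (-γ) * q (t + u)) t (a := t) (b := b))

lemma rightFracInt_eq_leftFracInt_reflect :
    rightFracInt b γ q t = leftFracInt a γ (fun x => q (a + b - x)) (a + b - t) := by
  have := integral_comp_sub_left (fun s => (a + b - t - s) ^ (-γ) * q (a + b - s)) (a + b)
    (a := t) (b := b)
  simp only [add_sub_cancel_right, sub_sub_cancel, sub_sub_sub_cancel_left] at this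
  rw [rightFracInt, leftFracInt, ← this]

lemma leftFracInt_eq_rpow_mul (hγ : γ < 1) (ht : a ≤ t) :
    leftFracInt a γ p t =
      (t - a) ^ (1 - γ) * ∫ v in (0 : ℝ)..1, v ^ (-γ) * p (t - (t - a) * v) := by
  rcases ht.eq_or_lt with rfl | ht
  · simp [leftFracInt, Real.zero_rpow (sub_ne_zero.2 hγ.ne')]
  have hc : 0 < t - a := sub_pos.2 ht
  have hsub := integral_comp_mul_left (fun u => u ^ (-γ) * p (t - u)) hc.ne' (a := 0) (b := 1)
  rw [mul_zero, mul_one, eq_inv_smul_iff₀ hc.ne', ← intervalIntegral.integral_smul] at hsub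
  rw [leftFracInt_eq_integral_comp_sub, ← hsub, ← intervalIntegral.integral_const_mul]
  refine integral_congr fun v hv => ?_
  rw [uIcc_of_le zero_le_one] at hv
  simp only [smul_eq_mul, Real.mul_rpow hc.le hv.1, sub_eq_add_neg (1 : ℝ),
    Real.rpow_add hc, Real.rpow_one]
  ring

lemma continuousOn_leftFracInt (hγ : γ < 1) (hp : ContinuousOn p (Icc a b)) :
    ContinuousOn (leftFracInt a γ p) (Icc a b) := by
  -- After substituting `s = t - (t - a) v` the singularity of the kernel no longer moves with `t`,
  -- so dominated convergence applies.
  obtain ⟨M, hM⟩ := isCompact_Icc.exists_bound_of_continuousOn hp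
  have hmaps : ∀ t ∈ Icc a b, ∀ v ∈ Icc (0 : ℝ) 1, t - (t - a) * v ∈ Icc a b := fun t ht v hv =>
    ⟨by nlinarith [ht.1, hv.2], by nlinarith [ht.1, ht.2, hv.1]⟩
  have hG : ContinuousOn (fun t => ∫ v in (0 : ℝ)..1, v ^ (-γ) * p (t - (t - a) * v))
      (Icc a b) := by
    intro t₀ ht₀
    refine continuousWithinAt_of_dominated_interval (bound := fun v => v ^ (-γ) * M) ?_ ?_
      ((intervalIntegrable_rpow' (by linarith)).mul_const M) ?_
    · filter_upwards [self_mem_nhdsWithin] with t ht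
      refine (Measurable.aestronglyMeasurable (by fun_prop)).mul ?_
      rw [uIoc_of_le zero_le_one]
      exact ((hp.comp (by fun_prop) (hmaps t ht)).aestronglyMeasurable measurableSet_Icc).mono_set
        Ioc_subset_Icc_self
    · filter_upwards [self_mem_nhdsWithin] with t ht
      refine Filter.Eventually.of_forall fun v hv => ?_
      rw [uIoc_of_le zero_le_one] at hv
      have hv0 : 0 ≤ v ^ (-γ) := Real.rpow_nonneg hv.1.le _
      rw [norm_mul, Real.norm_of_nonneg hv0]
      exact mul_le_mul_of_nonneg_left (hM _ (hmaps t ht v (Ioc_subset_Icc_self hv))) hv0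
    · refine Filter.Eventually.of_forall fun v hv => ?_
      rw [uIoc_of_le zero_le_one] at hv
      exact continuousWithinAt_const.mul
        ((hp.comp (by fun_prop) fun t ht => hmaps t ht v (Ioc_subset_Icc_self hv)) t₀ ht₀)
  have hpow : Continuous fun t : ℝ => (t - a) ^ (1 - γ) :=
    (continuous_id.sub continuous_const).rpow_const fun _ => Or.inr (by linarith)
  exact (hpow.continuousOn.mul hG).congr fun t ht => leftFracInt_eq_rpow_mul hγ ht.1

lemma continuousOn_rightFracInt (hγ : γ < 1) (hq : ContinuousOn q (Icc a b)) :
    ContinuousOn (rightFracInt b γ q) (Icc a b) := by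
  have hR : MapsTo (fun t => a + b - t) (Icc a b) (Icc a b) := fun t ht =>
    ⟨by linarith [ht.2], by linarith [ht.1]⟩
  have := (continuousOn_leftFracInt hγ (hq.comp (by fun_prop) hR)).comp (by fun_prop) hR
  exact this.congr fun t _ => rightFracInt_eq_leftFracInt_reflect (a := a)

lemma integrableOn_rpow_neg_mul (hγ : γ < 1) {F : ℝ → ℝ} (hF : Continuous F) (c : ℝ) :
    IntegrableOn (fun u : ℝ => u ^ (-γ) * F u) (Ioc 0 c) := by
  rcases le_total 0 c with hc | hc
  · rw [← intervalIntegrable_iff_integrableOn_Ioc_of_le hc]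
    exact (intervalIntegrable_rpow' (by linarith)).mul_continuousOn hF.continuousOn
  · simp [Ioc_eq_empty_of_le hc]

/-- The integrand of `∫ₐᵇ leftFracInt a γ p t * r t dt` in the coordinates `(t, u) = (t, t - s)`. -/
noncomputable def triangleKernel (a γ : ℝ) (p r : ℝ → ℝ) : ℝ × ℝ → ℝ :=
  {z : ℝ × ℝ | z.2 ≤ z.1 - a}.indicator fun z => z.2 ^ (-γ) * (p (z.1 - z.2) * r z.1)

lemma integrable_triangleKernel (hγ : γ < 1) (hp : Continuous p) (hr : Continuous r) :
    Integrable (triangleKernel a γ p r)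
      ((volume.restrict (Ioc a b)).prod (volume.restrict (Ioc 0 (b - a)))) := by
  obtain ⟨Mp, hMp⟩ := isCompact_Icc.exists_bound_of_continuousOn (hp.continuousOn (s := Icc a b))
  obtain ⟨Mr, hMr⟩ := isCompact_Icc.exists_bound_of_continuousOn (hr.continuousOn (s := Icc a b))
  have hbound : Integrable (fun z : ℝ × ℝ => (Mp * Mr) * z.2 ^ (-γ))
      ((volume.restrict (Ioc a b)).prod (volume.restrict (Ioc 0 (b - a)))) :=
    (integrable_const (Mp * Mr)).mul_prod
      (by simpa using integrableOn_rpow_neg_mul hγ (continuous_const (y := (1 : ℝ))) (b - a) :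
        IntegrableOn (fun u : ℝ => u ^ (-γ)) (Ioc 0 (b - a)))
  refine hbound.mono' ?_ ?_
  · refine (Measurable.indicator ?_ (measurableSet_le measurable_snd (by fun_prop)))
      |>.aestronglyMeasurable
    exact (by fun_prop : Measurable fun z : ℝ × ℝ => z.2 ^ (-γ)).mul (by fun_prop)
  rw [Measure.prod_restrict]
  filter_upwards [ae_restrict_mem (measurableSet_Ioc.prod measurableSet_Ioc)] with z ⟨ht, hu⟩
  have hk : 0 ≤ z.2 ^ (-γ) := Real.rpow_nonneg hu.1.le _
  have hab : a ≤ b := ht.1.le.trans ht.2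
  have hMp0 : 0 ≤ Mp := (norm_nonneg _).trans (hMp a ⟨le_rfl, hab⟩)
  have hMr0 : 0 ≤ Mr := (norm_nonneg _).trans (hMr a ⟨le_rfl, hab⟩)
  by_cases hz : z.2 ≤ z.1 - a
  · rw [triangleKernel, indicator_of_mem (show z ∈ {z : ℝ × ℝ | z.2 ≤ z.1 - a} from hz),
      norm_mul, norm_mul, Real.norm_of_nonneg hk, mul_comm (Mp * Mr)]
    exact mul_le_mul_of_nonneg_left (mul_le_mul (hMp _ ⟨by linarith, by linarith [hu.1, ht.2]⟩)
      (hMr _ (Ioc_subset_Icc_self ht)) (norm_nonneg _) hMp0) hk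
  · rw [triangleKernel, indicator_of_notMem (show z ∉ {z : ℝ × ℝ | z.2 ≤ z.1 - a} from hz),
      norm_zero]
    positivity

lemma setIntegral_triangleKernel_slice_fst (ht : t ∈ Ioc a b) :
    ∫ u in Ioc 0 (b - a), triangleKernel a γ p r (t, u) = leftFracInt a γ p t * r t := by
  have hslice : (fun u => triangleKernel a γ p r (t, u)) =
      (Iic (t - a)).indicator fun u => u ^ (-γ) * p (t - u) * r t := by
    ext u; simp [triangleKernel, indicator_apply, mul_assoc]
  rw [hslice, setIntegral_indicator measurableSet_Iic, Ioc_inter_Iic,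
    min_eq_right (by linarith [ht.2]), MeasureTheory.integral_mul_const,
    leftFracInt_eq_integral_comp_sub, integral_of_le (by linarith [ht.1])]

lemma setIntegral_triangleKernel_slice_snd {u : ℝ} (hu : u ∈ Ioc 0 (b - a)) :
    ∫ t in Ioc a b, triangleKernel a γ p r (t, u) =
      u ^ (-γ) * ∫ x in a..(b - u), p x * r (x + u) := by
  have hslice : (fun t => triangleKernel a γ p r (t, u)) =
      (Ici (a + u)).indicator fun t => u ^ (-γ) * (p (t - u) * r t) := by
    ext t; simp [triangleKernel, indicator_apply, le_sub_iff_add_le, add_comm u]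
  have hset : Ioc a b ∩ Ici (a + u) = Icc (a + u) b := by
    ext t; simp only [mem_inter_iff, mem_Ioc, mem_Ici, mem_Icc]
    constructor
    · rintro ⟨⟨-, htb⟩, hat⟩; exact ⟨hat, htb⟩
    · rintro ⟨hat, htb⟩; exact ⟨⟨by linarith [hu.1], htb⟩, hat⟩
  rw [hslice, setIntegral_indicator measurableSet_Ici, hset, integral_Icc_eq_integral_Ioc,
    ← integral_of_le (by linarith [hu.2]), intervalIntegral.integral_const_mul]
  congr 1
  simpa using integral_comp_sub_right (fun x => p x * r (x + u)) u (a := a + u) (b := b)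

lemma integral_leftFracInt_mul (hγ : γ < 1) (hab : a ≤ b) (hp : Continuous p)
    (hr : Continuous r) :
    ∫ t in a..b, leftFracInt a γ p t * r t =
      ∫ u in Ioc 0 (b - a), u ^ (-γ) * ∫ x in a..(b - u), p x * r (x + u) := by
  calc ∫ t in a..b, leftFracInt a γ p t * r t
      = ∫ t in Ioc a b, ∫ u in Ioc 0 (b - a), triangleKernel a γ p r (t, u) := by
        rw [integral_of_le hab]
        exact setIntegral_congr_fun measurableSet_Ioc fun t ht =>
          (setIntegral_triangleKernel_slice_fst ht).symm
    _ = ∫ u in Ioc 0 (b - a), ∫ t in Ioc a b, triangleKernel a γ p r (t, u) :=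
        integral_integral_swap (integrable_triangleKernel hγ hp hr)
    _ = _ := setIntegral_congr_fun measurableSet_Ioc fun u hu =>
        setIntegral_triangleKernel_slice_snd hu

lemma integral_mul_rightFracInt (hγ : γ < 1) (hab : a ≤ b) (hq : Continuous q)
    (hr : Continuous r) :
    ∫ t in a..b, r t * rightFracInt b γ q t =
      ∫ u in Ioc 0 (b - a), u ^ (-γ) * ∫ x in a..(b - u), r x * q (x + u) := by
  have hreflect := integral_comp_sub_left
    (fun t => leftFracInt a γ (fun x => q (a + b - x)) t * r (a + b - t)) (a + b) (a := a) (b := b)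
  simp only [add_sub_cancel_right, add_sub_cancel_left, sub_sub_cancel] at hreflect
  simp_rw [rightFracInt_eq_leftFracInt_reflect (a := a), mul_comm (r _) (leftFracInt _ _ _ _)]
  rw [hreflect, integral_leftFracInt_mul hγ hab (by fun_prop : Continuous fun x => q (a + b - x))
    (by fun_prop : Continuous fun x => r (a + b - x))]
  refine setIntegral_congr_fun measurableSet_Ioc fun u _ => ?_
  congr 1
  have := integral_comp_sub_left (fun x => r x * q (x + u)) (a + b - u) (a := a) (b := b - u)
  rw [show a + b - u - (b - u) = a by ring, show a + b - u - a = b - u by ring] at this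
  rw [← this]
  exact integral_congr fun x _ => by rw [mul_comm]; congr 2 <;> ring

lemma integral_shift_mul_deriv_add {u : ℝ} (hu : 0 ≤ u) (hub : u ≤ b - a)
    (hp : Continuous p) (hq : Continuous q) (hp' : Continuous p') (hq' : Continuous q')
    (hdp : ∀ t ∈ Ioo a b, HasDerivAt p (p' t) t) (hdq : ∀ t ∈ Ioo a b, HasDerivAt q (q' t) t) :
    ∫ x in a..(b - u), (p x * q' (x + u) + p' x * q (x + u)) =
      p (b - u) * q b - p a * q (a + u) := by
  rw [integral_eq_sub_of_hasDerivAt_of_le (by linarith) (f := fun x => p x * q (x + u))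
    (by fun_prop) (fun x hx => ?_) (by apply Continuous.intervalIntegrable; fun_prop),
    sub_add_cancel]
  have hq_shift : HasDerivAt (fun y => q (y + u)) (q' (x + u)) x :=
    (hdq (x + u) ⟨by linarith [hx.1], by linarith [hx.2]⟩).comp_add_const x u
  rw [add_comm]
  exact (hdp x ⟨hx.1, by linarith [hx.2]⟩).fun_mul hq_shift

lemma integral_leftFracInt_mul_deriv_add_deriv_mul_rightFracInt (hγ : γ < 1) (hab : a ≤ b)
    (hp : Continuous p) (hq : Continuous q) (hp' : Continuous p') (hq' : Continuous q')
    (hdp : ∀ t ∈ Ioo a b, HasDerivAt p (p' t) t) (hdq : ∀ t ∈ Ioo a b, HasDerivAt q (q' t) t) :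
    ∫ t in a..b, (leftFracInt a γ p t * q' t + p' t * rightFracInt b γ q t) =
      leftFracInt a γ p b * q b - p a * rightFracInt b γ q a := by
  have hL := continuousOn_leftFracInt (a := a) (b := b) hγ hp.continuousOn
  have hR := continuousOn_rightFracInt (a := a) (b := b) hγ hq.continuousOn
  have hshift {f g : ℝ → ℝ} (hf : Continuous f) (hg : Continuous g) :
      Continuous fun u => ∫ x in a..(b - u), f x * g (x + u) :=
    continuous_parametric_intervalIntegral_of_continuous (by fun_prop) (by fun_prop)
  rw [integral_add ((hL.fun_mul hq'.continuousOn).intervalIntegrable_of_Icc hab)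
      ((hp'.continuousOn.fun_mul hR).intervalIntegrable_of_Icc hab),
    integral_leftFracInt_mul hγ hab hp hq', integral_mul_rightFracInt hγ hab hq hp',
    ← integral_add (integrableOn_rpow_neg_mul hγ (hshift hp hq') _)
      (integrableOn_rpow_neg_mul hγ (hshift hp' hq) _)]
  calc ∫ u in Ioc 0 (b - a), (u ^ (-γ) * ∫ x in a..(b - u), p x * q' (x + u)) +
        u ^ (-γ) * ∫ x in a..(b - u), p' x * q (x + u)
      = ∫ u in Ioc 0 (b - a), (u ^ (-γ) * p (b - u) * q b - p a * (u ^ (-γ) * q (a + u))) := by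
        refine setIntegral_congr_fun measurableSet_Ioc fun u hu => ?_
        rw [← mul_add, ← intervalIntegral.integral_add
          (by apply Continuous.intervalIntegrable; fun_prop)
          (by apply Continuous.intervalIntegrable; fun_prop),
          integral_shift_mul_deriv_add hu.1.le hu.2 hp hq hp' hq' hdp hdq]
        ring
    _ = _ := by
        rw [integral_sub ((integrableOn_rpow_neg_mul hγ (by fun_prop) _).mul_const _)
            ((integrableOn_rpow_neg_mul hγ (by fun_prop) _).const_mul _),
          MeasureTheory.integral_mul_const, MeasureTheory.integral_const_mul,
          leftFracInt_eq_integral_comp_sub, rightFracInt_eq_integral_comp_add,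
          integral_of_le (sub_nonneg.2 hab), integral_of_le (sub_nonneg.2 hab)]

lemma exists_primitive_deriv_leftFracInt_mul_add_mul_deriv_rightFracInt (hγ : γ < 1)
    (hab : a ≤ b) (hp : Continuous p) (hq : Continuous q) (hp' : Continuous p')
    (hq' : Continuous q') (hdp : ∀ t ∈ Ioo a b, HasDerivAt p (p' t) t)
    (hdq : ∀ t ∈ Ioo a b, HasDerivAt q (q' t) t)
    (hL : ∀ t ∈ Ioo a b, DifferentiableAt ℝ (leftFracInt a γ p) t)
    (hR : ∀ t ∈ Ioo a b, DifferentiableAt ℝ (rightFracInt b γ q) t) :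
    ∃ Θ : ℝ → ℝ, ContinuousOn Θ (Icc a b) ∧ Θ a = Θ b ∧ ∀ t ∈ Ioo a b,
      HasDerivAt Θ (deriv (leftFracInt a γ p) t * q t + p t * deriv (rightFracInt b γ q) t) t := by
  have hparts := integral_leftFracInt_mul_deriv_add_deriv_mul_rightFracInt hγ hab hp hq hp' hq'
    hdp hdq
  set ρ : ℝ → ℝ := fun t => leftFracInt a γ p t * q' t + p' t * rightFracInt b γ q t
  have hLc := continuousOn_leftFracInt (a := a) (b := b) hγ hp.continuousOn
  have hRc := continuousOn_rightFracInt (a := a) (b := b) hγ hq.continuousOn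
  have hρ : ContinuousOn ρ (Icc a b) :=
    (hLc.fun_mul hq'.continuousOn).add (hp'.continuousOn.fun_mul hRc)
  refine ⟨fun t => leftFracInt a γ p t * q t + p t * rightFracInt b γ q t - ∫ s in a..t, ρ s,
    ?_, ?_, fun t ht => ?_⟩
  · refine ((hLc.fun_mul hq.continuousOn).add (hp.continuousOn.fun_mul hRc)).sub ?_
    rw [← uIcc_of_le hab] at hρ ⊢
    exact continuousOn_primitive_interval (hρ.integrableOn_compact isCompact_uIcc)
  · simp only [hparts, integral_same, leftFracInt_self, rightFracInt_self]
    ring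
  · have hprim : HasDerivAt (fun u => ∫ s in a..u, ρ s) (ρ t) t :=
      integral_hasDerivAt_right
        ((hρ.mono (Icc_subset_Icc_right ht.2.le)).intervalIntegrable_of_Icc ht.1.le)
        ((hρ.mono Ioo_subset_Icc_self).stronglyMeasurableAtFilter isOpen_Ioo t ht)
        (hρ.continuousAt (Icc_mem_nhds ht.1 ht.2))
    refine ((((hL t ht).hasDerivAt.fun_mul (hdq t ht)).fun_add
      ((hdp t ht).fun_mul (hR t ht).hasDerivAt)).fun_sub hprim).congr_deriv ?_
    simp only [ρ]
    ring

lemma integral_smul_ofReal_eq_leftFracInt (x : ℝ → ℝ) (τ : ℝ) :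
    ∫ s in a..τ, ((τ - s) ^ (-γ) : ℝ) • ((x s : ℝ) : ℂ) = (leftFracInt a γ x τ : ℂ) := by
  simp [leftFracInt, ← intervalIntegral.integral_ofReal, Complex.real_smul]

lemma integral_smul_ofReal_eq_rightFracInt (x : ℝ → ℝ) (τ : ℝ) :
    ∫ s in τ..b, ((s - τ) ^ (-γ) : ℝ) • ((x s : ℝ) : ℂ) = (rightFracInt b γ x τ : ℂ) := by
  simp [rightFracInt, ← intervalIntegral.integral_ofReal, Complex.real_smul]

lemma RLlC_ofReal (x : ℝ → ℝ) :
    RLlC a γ (fun s => (x s : ℂ)) t =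
      ((Real.Gamma (1 - γ))⁻¹ * deriv (leftFracInt a γ x) t : ℝ) := by
  simp_rw [RLlC, integral_smul_ofReal_eq_leftFracInt, deriv_ofReal_comp, Complex.real_smul]
  push_cast
  rfl

lemma RLrC_ofReal (x : ℝ → ℝ) :
    RLrC b γ (fun s => (x s : ℂ)) t =
      (-((Real.Gamma (1 - γ))⁻¹ * deriv (rightFracInt b γ x) t) : ℝ) := by
  simp_rw [RLrC, integral_smul_ofReal_eq_rightFracInt, deriv_ofReal_comp, Complex.real_smul]
  push_cast
  rfl

lemma leftFracInt_eventuallyEq {x y : ℝ → ℝ} (hxy : EqOn x y (Icc a b))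
    (ht : t ∈ Ioo a b) : leftFracInt a γ x =ᶠ[nhds t] leftFracInt a γ y := by
  filter_upwards [Ioo_mem_nhds ht.1 ht.2] with τ hτ
  refine integral_congr fun s hs => ?_
  rw [uIcc_of_le hτ.1.le] at hs
  simp only [hxy ⟨hs.1, hs.2.trans hτ.2.le⟩]

lemma rightFracInt_eventuallyEq {x y : ℝ → ℝ} (hxy : EqOn x y (Icc a b))
    (ht : t ∈ Ioo a b) : rightFracInt b γ x =ᶠ[nhds t] rightFracInt b γ y := by
  filter_upwards [Ioo_mem_nhds ht.1 ht.2] with τ hτ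
  refine integral_congr fun s hs => ?_
  rw [uIcc_of_le hτ.2.le] at hs
  simp only [hxy ⟨hτ.1.le.trans hs.1, hs.2⟩]

lemma exists_primitive_RLlC_mul_sub_mul_RLrC {f g : ℝ → ℝ} (hab : a < b) (hγ : γ < 1)
    (hf : ContDiffOn ℝ 1 f (Icc a b)) (hg : ContDiffOn ℝ 1 g (Icc a b))
    (hfL : ∀ t ∈ Ioo a b,
      DifferentiableAt ℝ (fun τ => ∫ s in a..τ, ((τ - s) ^ (-γ) : ℝ) • ((f s : ℝ) : ℂ)) t)
    (hgR : ∀ t ∈ Ioo a b,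
      DifferentiableAt ℝ (fun τ => ∫ s in τ..b, ((s - τ) ^ (-γ) : ℝ) • ((g s : ℝ) : ℂ)) t) :
    ∃ Θ : ℝ → ℂ, ContinuousOn Θ (Icc a b) ∧ Θ a = Θ b ∧ ∀ t ∈ Ioo a b,
      HasDerivAt Θ (RLlC a γ (fun s => (f s : ℂ)) t * g t - f t * RLrC b γ (fun s => (g s : ℂ)) t)
        t := by
  obtain ⟨F, F', hF, hF', hfF, hdF⟩ := exists_continuous_extension_of_contDiffOn hab hf
  obtain ⟨G, G', hG, hG', hgG, hdG⟩ := exists_continuous_extension_of_contDiffOn hab hg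
  simp_rw [integral_smul_ofReal_eq_leftFracInt, integral_smul_ofReal_eq_rightFracInt,
    differentiableAt_ofReal_comp_iff] at hfL hgR
  obtain ⟨Θ, hΘc, hΘab, hΘ⟩ := exists_primitive_deriv_leftFracInt_mul_add_mul_deriv_rightFracInt
    hγ hab.le hF hG hF' hG' hdF hdG
    (fun t ht => (leftFracInt_eventuallyEq hfF ht).differentiableAt_iff.1 (hfL t ht))
    (fun t ht => (rightFracInt_eventuallyEq hgG ht).differentiableAt_iff.1 (hgR t ht))
  refine ⟨fun t => ((Real.Gamma (1 - γ))⁻¹ * Θ t : ℝ),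
    Complex.continuous_ofReal.comp_continuousOn (continuousOn_const.mul hΘc),
    by simp only [hΘab], fun t ht => ((hΘ t ht).const_mul _).ofReal_comp.congr_deriv ?_⟩
  have hft : f t = F t := hfF (Ioo_subset_Icc_self ht)
  have hgt : g t = G t := hgG (Ioo_subset_Icc_self ht)
  rw [RLlC_ofReal, RLrC_ofReal, (leftFracInt_eventuallyEq hfF ht).deriv_eq,
    (rightFracInt_eventuallyEq hgG ht).deriv_eq, hft, hgt]
  push_cast
  ring

end FractionalIntegral

theorem stmt5_general {a b : ℝ} (hab : a < b) {α β : ℝ}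
    (hα : α ∈ Set.Ioo (0 : ℝ) 1) (hβ : β ∈ Set.Ioo (0 : ℝ) 1) (μ : ℂ)
    (f g : ℝ → ℝ)
    (hf : ContDiffOn ℝ 1 f (Set.Icc a b)) (hg : ContDiffOn ℝ 1 g (Set.Icc a b))
    (hfα : HasRLpair a b α α fun s => ((f s : ℝ) : ℂ))
    (hfβ : HasRLpair a b β β fun s => ((f s : ℝ) : ℂ))
    (hgα : HasRLpair a b α α fun s => ((g s : ℝ) : ℂ))
    (hgβ : HasRLpair a b β β fun s => ((g s : ℝ) : ℂ))
    (hint1 : IntervalIntegrable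
      (fun t => Dfrac a b α β μ (fun s => ((f s : ℝ) : ℂ)) t * ((g t : ℝ) : ℂ)) volume a b)
    (hint2 : IntervalIntegrable
      (fun t => ((f t : ℝ) : ℂ) * Dfrac a b β α (-μ) (fun s => ((g s : ℝ) : ℂ)) t) volume a b) :
    ∫ t in a..b, Dfrac a b α β μ (fun s => ((f s : ℝ) : ℂ)) t * ((g t : ℝ) : ℂ)
      = -∫ t in a..b, ((f t : ℝ) : ℂ) * Dfrac a b β α (-μ) (fun s => ((g s : ℝ) : ℂ)) t := by
  obtain ⟨Θ₁, hΘ₁c, hΘ₁ab, hΘ₁⟩ :=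
    exists_primitive_RLlC_mul_sub_mul_RLrC hab hα.2 hf hg hfα.1 hgα.2
  obtain ⟨Θ₂, hΘ₂c, hΘ₂ab, hΘ₂⟩ :=
    exists_primitive_RLlC_mul_sub_mul_RLrC hab hβ.2 hg hf hgβ.1 hfβ.2
  have hderiv : ∀ t ∈ Ioo a b,
      HasDerivAt (fun t => (1 + Complex.I * μ) / 2 * Θ₁ t + (1 - Complex.I * μ) / 2 * Θ₂ t)
        (Dfrac a b α β μ (fun s => ((f s : ℝ) : ℂ)) t * ((g t : ℝ) : ℂ)
          + ((f t : ℝ) : ℂ) * Dfrac a b β α (-μ) (fun s => ((g s : ℝ) : ℂ)) t) t :=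
    fun t ht => (((hΘ₁ t ht).const_mul _).fun_add ((hΘ₂ t ht).const_mul _)).congr_deriv
      (by simp only [Dfrac]; ring)
  have hFTC := integral_eq_sub_of_hasDerivAt_of_le hab.le
    ((continuousOn_const.fun_mul hΘ₁c).fun_add (continuousOn_const.fun_mul hΘ₂c)) hderiv
    (hint1.add hint2)
  rw [integral_add hint1 hint2, hΘ₁ab, hΘ₂ab, sub_self] at hFTC
  exact eq_neg_of_add_eq_zero_left hFTC

theorem stmt5 {a b : ℝ} (hab : a < b) {α β : ℝ}
    (hα : α ∈ Set.Ioo (0 : ℝ) 1) (hβ : β ∈ Set.Ioo (0 : ℝ) 1) (μ : ℂ)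
    (f g : ℝ → ℝ)
    (hf : ContDiffOn ℝ 1 f (Set.Icc a b)) (hg : ContDiffOn ℝ 1 g (Set.Icc a b))
    (hfα : HasRLpair a b α α fun s => ((f s : ℝ) : ℂ))
    (hfβ : HasRLpair a b β β fun s => ((f s : ℝ) : ℂ))
    (hgα : HasRLpair a b α α fun s => ((g s : ℝ) : ℂ))
    (hgβ : HasRLpair a b β β fun s => ((g s : ℝ) : ℂ))
    (hflαc : ContinuousOn (RLlC a α fun s => ((f s : ℝ) : ℂ)) (Set.Ioo a b))
    (hflβc : ContinuousOn (RLlC a β fun s => ((f s : ℝ) : ℂ)) (Set.Ioo a b))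
    (hfrαc : ContinuousOn (RLrC b α fun s => ((f s : ℝ) : ℂ)) (Set.Ioo a b))
    (hfrβc : ContinuousOn (RLrC b β fun s => ((f s : ℝ) : ℂ)) (Set.Ioo a b))
    (hglαc : ContinuousOn (RLlC a α fun s => ((g s : ℝ) : ℂ)) (Set.Ioo a b))
    (hglβc : ContinuousOn (RLlC a β fun s => ((g s : ℝ) : ℂ)) (Set.Ioo a b))
    (hgrαc : ContinuousOn (RLrC b α fun s => ((g s : ℝ) : ℂ)) (Set.Ioo a b))
    (hgrβc : ContinuousOn (RLrC b β fun s => ((g s : ℝ) : ℂ)) (Set.Ioo a b))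
    (hint1 : IntervalIntegrable
      (fun t => Dfrac a b α β μ (fun s => ((f s : ℝ) : ℂ)) t * ((g t : ℝ) : ℂ)) volume a b)
    (hint2 : IntervalIntegrable
      (fun t => ((f t : ℝ) : ℂ) * Dfrac a b β α (-μ) (fun s => ((g s : ℝ) : ℂ)) t) volume a b)
    (hbc : (f a = 0 ∧ f b = 0) ∨ (g a = 0 ∧ g b = 0)) :
    ∫ t in a..b, Dfrac a b α β μ (fun s => ((f s : ℝ) : ℂ)) t * ((g t : ℝ) : ℂ)
      = -∫ t in a..b, ((f t : ℝ) : ℂ) * Dfrac a b β α (-μ) (fun s => ((g s : ℝ) : ℂ)) t :=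
  stmt5_general hab hα hβ μ f g hf hg hfα hfβ hgα hgβ hint1 hint2
end

section
/- Let a < b, α, β ∈ (0,1), μ ∈ ℂ, d ≥ 1, and let L(x,v) : ℝ^d × ℂ^d → ℂ be an admissible Lagrangian, continuously differentiable in x, satisfying the Legendre property: there is a continuously differentiable map f : ℝ^d × ℂ^d → ℂ^d with ∂L/∂v(x, f(x,p)) = p and f(x, ∂L/∂v(x,v)) = v for all x, p, v. Define the Hamiltonian H(x,p) = p·f(x,p) − L(x, f(x,p)). Let x : [a,b] → ℝ^d with D^{α,β}_μ x continuous, set p(t) = ∂L/∂v(x(t), D^{α,β}_μ x(t)), and assume D^{β,α}_{−μ} p exists. Then x satisfies the fractional Euler–Lagrange equation D^{β,α}_{−μ}[ ∂L/∂v(x, D^{α,β}_μ x) ](t) = ∂L/∂x(x(t), D^{α,β}_μ x(t)) on (a,b) if and only if the pair (x, p) satisfies the fractional Hamiltonian system: D^{α,β}_μ x(t) = ∂H/∂p(x(t), p(t)) and D^{β,α}_{−μ} p(t) = −∂H/∂x(x(t), p(t)) on (a,b). -/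
open MeasureTheory intervalIntegral

/-!
The equivalence is pointwise in `t` and rests on the two Legendre identities
`∂H/∂p (x, p) = f (x, p)` and `∂H/∂x (x, p) = -∂L/∂x (x, f (x, p))`. Continuous partial
derivatives make `L` differentiable over `ℝ` jointly in `(x, v)`, so both identities come from the
chain rule applied to `H = p · f - L (x, f)`: the terms containing the derivative of `f` cancel
because `∂L/∂v (x, f (x, p)) = p`. Since `f (x, ∂L/∂v (x, v)) = v`, along `p = ∂L/∂v (x, D x)` the
first Hamilton equation holds identically and the second is the Euler–Lagrange equation.
-/

open Function

theorem hasStrictFDerivAt_pi_of_continuous_partials {𝕜 E F : Type*} [NontriviallyNormedField 𝕜]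
    [IsRCLikeNormedField 𝕜] [NormedAddCommGroup E] [NormedSpace 𝕜 E] [NormedAddCommGroup F]
    [NormedSpace 𝕜 F] {n : ℕ} {g : (Fin n → E) → F} {g' : (Fin n → E) → Fin n → E →L[𝕜] F}
    (hg : ∀ Y i, HasFDerivAt (fun z => g (update Y i z)) (g' Y i) (Y i))
    (hg' : ∀ i, Continuous fun Y => g' Y i) (Y : Fin n → E) :
    HasStrictFDerivAt g (∑ i, g' Y i ∘L ContinuousLinearMap.proj i) Y := by
  induction n with
  | zero =>
    have hconst : g = fun _ => g Y := funext fun Z => congrArg g (Subsingleton.elim Z Y)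
    rw [hconst]
    simpa using hasStrictFDerivAt_const (g Y) Y
  | succ n ih =>
    set e := Fin.consEquivL 𝕜 fun _ : Fin (n + 1) => E
    have hfirst : ∀ z y, HasFDerivAt (fun w => g (Fin.cons w y)) (g' (Fin.cons z y) 0) z :=
      fun z y => by simpa using hg (Fin.cons z y) 0
    have hrest : ∀ z y, HasFDerivAt (fun w => g (Fin.cons z w))
        (∑ i, g' (Fin.cons z y) i.succ ∘L ContinuousLinearMap.proj i) y := fun z y =>
      (ih (g := fun w => g (Fin.cons z w)) (g' := fun w i => g' (Fin.cons z w) i.succ)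
        (fun w i => by simpa only [← Fin.cons_update, Fin.cons_succ] using hg (Fin.cons z w) i.succ)
        (fun i => (hg' i.succ).comp (e.continuous.comp (Continuous.prodMk_right z))) y).hasFDerivAt
    have hrestC : Continuous fun u : E × (Fin n → E) =>
        ∑ i : Fin n, g' (Fin.cons u.1 u.2) i.succ ∘L ContinuousLinearMap.proj i :=
      continuous_finsetSum _ fun i _ => ((hg' i.succ).comp e.continuous).clm_comp continuous_const
    have hG : HasStrictFDerivAt (fun u : E × (Fin n → E) => g (Fin.cons u.1 u.2))
        ((g' Y 0).coprod (∑ i, g' Y i.succ ∘L ContinuousLinearMap.proj i)) (e.symm Y) := by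
      have h := hasStrictFDerivAt_uncurry_coprod (u := e.symm Y)
        (f := fun z y => g (Fin.cons z y)) (f₁ := fun z y => g' (Fin.cons z y) 0)
        (f₂ := fun z y => ∑ i : Fin n, g' (Fin.cons z y) i.succ ∘L ContinuousLinearMap.proj i)
        (.of_forall fun u => hfirst u.1 u.2) (.of_forall fun u => hrest u.1 u.2)
        ((hg' 0).comp e.continuous).continuousAt hrestC.continuousAt
      simpa [e, HasUncurry.uncurry] using h
    have hcomp := hG.comp Y e.symm.hasStrictFDerivAt
    simp only [e, Fin.consEquivL_symm_apply, Fin.cons_self_tail] at hcomp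
    refine hcomp.congr_fderiv ?_
    ext Z
    simp [Fin.sum_univ_succ, Fin.tail]

structure HasContinuousPartials {d : ℕ} (g : (Fin d → ℝ) → (Fin d → ℂ) → ℂ)
    (gx gv : (Fin d → ℝ) → (Fin d → ℂ) → Fin d → ℂ) : Prop where
  hasDerivAt_x : ∀ X V i, HasDerivAt (fun s : ℝ => g (update X i s) V) (gx X V i) (X i)
  hasDerivAt_v : ∀ X V i, HasDerivAt (fun z : ℂ => g X (update V i z)) (gv X V i) (V i)
  continuous_x : Continuous fun q : (Fin d → ℝ) × (Fin d → ℂ) => gx q.1 q.2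
  continuous_v : Continuous fun q : (Fin d → ℝ) × (Fin d → ℂ) => gv q.1 q.2

noncomputable def legendreHamiltonian {d : ℕ} (L : (Fin d → ℝ) → (Fin d → ℂ) → ℂ)
    (f : (Fin d → ℝ) → (Fin d → ℂ) → Fin d → ℂ) (X : Fin d → ℝ) (P : Fin d → ℂ) : ℂ :=
  (∑ i, P i * f X P i) - L X (f X P)

namespace HasContinuousPartials

variable {d : ℕ} {g : (Fin d → ℝ) → (Fin d → ℂ) → ℂ} {gx gv : (Fin d → ℝ) → (Fin d → ℂ) → Fin d → ℂ}

theorem hasStrictFDerivAt (hg : HasContinuousPartials g gx gv) (X : Fin d → ℝ) (V : Fin d → ℂ) :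
    HasStrictFDerivAt (fun q : (Fin d → ℝ) × (Fin d → ℂ) => g q.1 q.2)
      ((∑ i, (1 : ℝ →L[ℝ] ℝ).smulRight (gx X V i) ∘L ContinuousLinearMap.proj i).coprod
        (∑ i, (gv X V i • (1 : ℂ →L[ℝ] ℂ)) ∘L ContinuousLinearMap.proj i)) (X, V) := by
  have hxC : ∀ i, Continuous fun q : (Fin d → ℝ) × (Fin d → ℂ) =>
      (1 : ℝ →L[ℝ] ℝ).smulRight (gx q.1 q.2 i) :=
    fun i => (ContinuousLinearMap.smulRightL ℝ ℝ ℂ 1).continuous.comp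
      ((continuous_apply i).comp hg.continuous_x)
  have hvC : ∀ i, Continuous fun q : (Fin d → ℝ) × (Fin d → ℂ) => gv q.1 q.2 i • (1 : ℂ →L[ℝ] ℂ) :=
    fun i => ((continuous_apply i).comp hg.continuous_v).smul continuous_const
  have hx : ∀ Y W, HasFDerivAt (g · W)
      (∑ i, (1 : ℝ →L[ℝ] ℝ).smulRight (gx Y W i) ∘L ContinuousLinearMap.proj i) Y :=
    fun Y W => (hasStrictFDerivAt_pi_of_continuous_partials
      (fun Y' i => (hg.hasDerivAt_x Y' W i).hasFDerivAt)
      (fun i => (hxC i).comp (Continuous.prodMk_left W)) Y).hasFDerivAt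
  have hv : ∀ Y W, HasFDerivAt (g Y ·)
      (∑ i, (gv Y W i • (1 : ℂ →L[ℝ] ℂ)) ∘L ContinuousLinearMap.proj i) W :=
    fun Y W => (hasStrictFDerivAt_pi_of_continuous_partials
      (fun W' i => (hg.hasDerivAt_v Y W' i).complexToReal_fderiv)
      (fun i => (hvC i).comp (Continuous.prodMk_right Y)) W).hasFDerivAt
  have hxsumC : Continuous fun q : (Fin d → ℝ) × (Fin d → ℂ) =>
      ∑ i, (1 : ℝ →L[ℝ] ℝ).smulRight (gx q.1 q.2 i) ∘L ContinuousLinearMap.proj i :=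
    continuous_finsetSum _ fun i _ => (hxC i).clm_comp continuous_const
  have hvsumC : Continuous fun q : (Fin d → ℝ) × (Fin d → ℂ) =>
      ∑ i, (gv q.1 q.2 i • (1 : ℂ →L[ℝ] ℂ)) ∘L ContinuousLinearMap.proj i :=
    continuous_finsetSum _ fun i _ => (hvC i).clm_comp continuous_const
  exact hasStrictFDerivAt_uncurry_coprod (u := (X, V))
    (f₁ := fun Y W => ∑ i, (1 : ℝ →L[ℝ] ℝ).smulRight (gx Y W i) ∘L ContinuousLinearMap.proj i)
    (f₂ := fun Y W => ∑ i, (gv Y W i • (1 : ℂ →L[ℝ] ℂ)) ∘L ContinuousLinearMap.proj i)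
    (.of_forall fun q => hx q.1 q.2) (.of_forall fun q => hv q.1 q.2)
    hxsumC.continuousAt hvsumC.continuousAt

theorem hasDerivAt_comp (hg : HasContinuousPartials g gx gv) {XX : ℝ → Fin d → ℝ}
    {VV : ℝ → Fin d → ℂ} {ξ : Fin d → ℝ} {ν : Fin d → ℂ} {t : ℝ}
    (hX : HasDerivAt XX ξ t) (hV : HasDerivAt VV ν t) :
    HasDerivAt (fun s => g (XX s) (VV s))
      ((∑ i, gx (XX t) (VV t) i * ξ i) + ∑ i, gv (XX t) (VV t) i * ν i) t := by
  refine ((hg.hasStrictFDerivAt (XX t) (VV t)).hasFDerivAt.comp_hasDerivAt t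
    (hX.prodMk hV)).congr_deriv ?_
  simp [Complex.real_smul, mul_comm]

variable {L : (Fin d → ℝ) → (Fin d → ℂ) → ℂ} {Lx Lv : (Fin d → ℝ) → (Fin d → ℂ) → Fin d → ℂ}
  {f : (Fin d → ℝ) → (Fin d → ℂ) → Fin d → ℂ}

theorem hasDerivAt_legendreHamiltonian_comp (hL : HasContinuousPartials L Lx Lv)
    (hf : ContDiff ℝ 1 fun q : (Fin d → ℝ) × (Fin d → ℂ) => f q.1 q.2)
    (hLeg : ∀ X P, Lv X (f X P) = P) {XX : ℝ → Fin d → ℝ} {PP : ℝ → Fin d → ℂ}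
    {ξ : Fin d → ℝ} {π : Fin d → ℂ} {t : ℝ} (hX : HasDerivAt XX ξ t) (hP : HasDerivAt PP π t) :
    HasDerivAt (fun s => legendreHamiltonian L f (XX s) (PP s))
      ((∑ i, π i * f (XX t) (PP t) i) - ∑ i, Lx (XX t) (f (XX t) (PP t)) i * ξ i) t := by
  obtain ⟨F', hF⟩ : ∃ F', HasDerivAt (fun s => f (XX s) (PP s)) F' t :=
    ⟨_, ((hf.differentiable one_ne_zero _).hasFDerivAt.comp_hasDerivAt t (hX.prodMk hP))⟩
  have hpair : HasDerivAt (fun s => ∑ i, PP s i * f (XX s) (PP s) i)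
      (∑ i, (π i * f (XX t) (PP t) i + PP t i * F' i)) t :=
    .fun_sum fun i _ => (hasDerivAt_pi.mp hP i).mul (hasDerivAt_pi.mp hF i)
  refine (hpair.sub (hL.hasDerivAt_comp hX hF)).congr_deriv ?_
  rw [hLeg, Finset.sum_add_distrib]
  ring

theorem hasDerivAt_legendreHamiltonian_update_position (hL : HasContinuousPartials L Lx Lv)
    (hf : ContDiff ℝ 1 fun q : (Fin d → ℝ) × (Fin d → ℂ) => f q.1 q.2)
    (hLeg : ∀ X P, Lv X (f X P) = P) (X : Fin d → ℝ) (P : Fin d → ℂ) (i : Fin d) :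
    HasDerivAt (fun s : ℝ => legendreHamiltonian L f (update X i s) P) (-Lx X (f X P) i) (X i) := by
  have h := hL.hasDerivAt_legendreHamiltonian_comp hf hLeg (hasDerivAt_update X i (X i))
    (hasDerivAt_const (X i) P)
  simp only [update_eq_self] at h
  refine h.congr_deriv ?_
  simp [Pi.single_apply, apply_ite Complex.ofReal, mul_ite]

/-- The Hamiltonian need not be holomorphic in `P`, so a complex partial derivative is identified
through its restriction to real increments. -/
theorem eq_of_hasDerivAt_legendreHamiltonian_update_momentum (hL : HasContinuousPartials L Lx Lv)
    (hf : ContDiff ℝ 1 fun q : (Fin d → ℝ) × (Fin d → ℂ) => f q.1 q.2)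
    (hLeg : ∀ X P, Lv X (f X P) = P) {X : Fin d → ℝ} {P : Fin d → ℂ} {i : Fin d} {c : ℂ}
    (h : HasDerivAt (fun z : ℂ => legendreHamiltonian L f X (update P i z)) c (P i)) :
    c = f X P i := by
  have hreal : HasDerivAt (fun t : ℝ => legendreHamiltonian L f X (update P i (P i + t))) c 0 := by
    have h0 : HasDerivAt (fun z : ℂ => legendreHamiltonian L f X (update P i z)) c
        (P i + ((0 : ℝ) : ℂ)) := by simpa using h
    exact (h0.comp_const_add (P i) _).comp_ofReal
  have hcurve : HasDerivAt (fun t : ℝ => update P i (P i + t)) (Pi.single i 1) 0 :=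
    (((hasDerivAt_update P i _).comp_const_add (P i) _).scomp (0 : ℝ)
      (Complex.ofRealCLM.hasDerivAt (x := 0))).congr_deriv (by simp)
  have hchain := hL.hasDerivAt_legendreHamiltonian_comp hf hLeg (hasDerivAt_const 0 X) hcurve
  simp only [Complex.ofReal_zero, add_zero, update_eq_self] at hchain
  refine hreal.unique (hchain.congr_deriv ?_)
  simp [Pi.single_apply]

end HasContinuousPartials

theorem stmt11_general {a b : ℝ} {α β : ℝ} (μ : ℂ) {d : ℕ}
    (L : (Fin d → ℝ) → (Fin d → ℂ) → ℂ)
    (Lx Lv : (Fin d → ℝ) → (Fin d → ℂ) → Fin d → ℂ)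
    (hLx : ∀ X V i, HasDerivAt (fun s : ℝ => L (Function.update X i s) V) (Lx X V i) (X i))
    (hLv : ∀ X V i, HasDerivAt (fun z : ℂ => L X (Function.update V i z)) (Lv X V i) (V i))
    (hLxC : Continuous fun q : (Fin d → ℝ) × (Fin d → ℂ) => Lx q.1 q.2)
    (hLvC : Continuous fun q : (Fin d → ℝ) × (Fin d → ℂ) => Lv q.1 q.2)
    (f : (Fin d → ℝ) → (Fin d → ℂ) → Fin d → ℂ)
    (hfC1 : ContDiff ℝ 1 fun q : (Fin d → ℝ) × (Fin d → ℂ) => f q.1 q.2)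
    (hLeg1 : ∀ X P, Lv X (f X P) = P)
    (hLeg2 : ∀ X V, f X (Lv X V) = V)
    (H : (Fin d → ℝ) → (Fin d → ℂ) → ℂ)
    (hH : ∀ X P, H X P = (∑ i, P i * f X P i) - L X (f X P))
    (Hx Hp : (Fin d → ℝ) → (Fin d → ℂ) → Fin d → ℂ)
    (hHx : ∀ X P i, HasDerivAt (fun s : ℝ => H (Function.update X i s) P) (Hx X P i) (X i))
    (hHp : ∀ X P i, HasDerivAt (fun z : ℂ => H X (Function.update P i z)) (Hp X P i) (P i))
    (x : ℝ → Fin d → ℝ) (p : ℝ → Fin d → ℂ)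
    (hp : ∀ t, p t = Lv (x t) (DfracV a b α β μ x t)) :
    (∀ t ∈ Set.Ioo a b, ∀ i : Fin d,
        Dfrac a b β α (-μ) (fun s => p s i) t = Lx (x t) (DfracV a b α β μ x t) i)
      ↔ (∀ t ∈ Set.Ioo a b, ∀ i : Fin d,
          DfracV a b α β μ x t i = Hp (x t) (p t) i ∧
          Dfrac a b β α (-μ) (fun s => p s i) t = -Hx (x t) (p t) i) := by
  have hL : HasContinuousPartials L Lx Lv := ⟨hLx, hLv, hLxC, hLvC⟩
  obtain rfl : H = legendreHamiltonian L f := funext₂ hH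
  have hHp_eq : ∀ X P i, Hp X P i = f X P i := fun X P i =>
    hL.eq_of_hasDerivAt_legendreHamiltonian_update_momentum hfC1 hLeg1 (hHp X P i)
  have hHx_eq : ∀ X P i, Hx X P i = -Lx X (f X P) i := fun X P i =>
    (hHx X P i).unique (hL.hasDerivAt_legendreHamiltonian_update_position hfC1 hLeg1 X P i)
  have hfp : ∀ t, f (x t) (p t) = DfracV a b α β μ x t := fun t => by rw [hp t, hLeg2]
  simp only [hHp_eq, hHx_eq, hfp, neg_neg, true_and]

theorem stmt11 {a b : ℝ} (hab : a < b) {α β : ℝ}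
    (hα : α ∈ Set.Ioo (0 : ℝ) 1) (hβ : β ∈ Set.Ioo (0 : ℝ) 1) (μ : ℂ)
    {d : ℕ} (hd : 1 ≤ d)
    (L : (Fin d → ℝ) → (Fin d → ℂ) → ℂ)
    (Lx Lv : (Fin d → ℝ) → (Fin d → ℂ) → Fin d → ℂ)
    (hLx : ∀ X V i, HasDerivAt (fun s : ℝ => L (Function.update X i s) V) (Lx X V i) (X i))
    (hLv : ∀ X V i, HasDerivAt (fun z : ℂ => L X (Function.update V i z)) (Lv X V i) (V i))
    (hLxC : Continuous fun q : (Fin d → ℝ) × (Fin d → ℂ) => Lx q.1 q.2)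
    (hLvC : Continuous fun q : (Fin d → ℝ) × (Fin d → ℂ) => Lv q.1 q.2)
    (hLreal : ∀ (X : Fin d → ℝ) (V : Fin d → ℝ), (L X fun i => ((V i : ℝ) : ℂ)).im = 0)
    (f : (Fin d → ℝ) → (Fin d → ℂ) → Fin d → ℂ)
    (hfC1 : ContDiff ℝ 1 fun q : (Fin d → ℝ) × (Fin d → ℂ) => f q.1 q.2)
    (hLeg1 : ∀ X P, Lv X (f X P) = P)
    (hLeg2 : ∀ X V, f X (Lv X V) = V)
    (H : (Fin d → ℝ) → (Fin d → ℂ) → ℂ)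
    (hH : ∀ X P, H X P = (∑ i, P i * f X P i) - L X (f X P))
    (Hx Hp : (Fin d → ℝ) → (Fin d → ℂ) → Fin d → ℂ)
    (hHx : ∀ X P i, HasDerivAt (fun s : ℝ => H (Function.update X i s) P) (Hx X P i) (X i))
    (hHp : ∀ X P i, HasDerivAt (fun z : ℂ => H X (Function.update P i z)) (Hp X P i) (P i))
    (x : ℝ → Fin d → ℝ)
    (hxex : ∀ i : Fin d, HasRLpair a b α β fun s => ((x s i : ℝ) : ℂ))
    (hxc : ContinuousOn (fun t => DfracV a b α β μ x t) (Set.Ioo a b))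
    (p : ℝ → Fin d → ℂ)
    (hp : ∀ t, p t = Lv (x t) (DfracV a b α β μ x t))
    (hpex : ∀ i : Fin d, HasRLpair a b β α fun s => p s i) :
    (∀ t ∈ Set.Ioo a b, ∀ i : Fin d,
        Dfrac a b β α (-μ) (fun s => p s i) t = Lx (x t) (DfracV a b α β μ x t) i)
      ↔ (∀ t ∈ Set.Ioo a b, ∀ i : Fin d,
          DfracV a b α β μ x t i = Hp (x t) (p t) i ∧
          Dfrac a b β α (-μ) (fun s => p s i) t = -Hx (x t) (p t) i) :=
  stmt11_general μ L Lx Lv hLx hLv hLxC hLvC f hfC1 hLeg1 hLeg2 H hH Hx Hp hHx hHp x p hp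
end

section
/- Let a < b, α, β ∈ (0,1), μ ∈ ℂ, i ≥ 1 an integer, and let f, g : [a,b] → ℝ be such that for each 0 ≤ j ≤ i the iterated derivatives (D^{α,β}_μ)^j g and (D^{β,α}_{−μ})^j f exist, are continuous, and are continuously differentiable when j < i (so that each application of the fractional integration-by-parts formula is valid), with all the products appearing below integrable. If (D^{α,β}_μ)^j g(a) = (D^{α,β}_μ)^j g(b) = 0 for every 0 ≤ j ≤ i−1, then ∫_a^b f(t) · ((D^{α,β}_μ)^i g)(t) dt = (−1)^i ∫_a^b ((D^{β,α}_{−μ})^i f)(t) · g(t) dt. -/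
/-!
Write `L_γ w(t) = ∫_a^t (t-s)^{-γ} w(s) ds` and `R_γ w(t) = ∫_t^b (s-t)^{-γ} w(s) ds`. On `(a, b)`,
`D^{α,β}_μ v` is the derivative of `Φ_v = ((1+iμ)/2) Γ(1-α)⁻¹ L_α v - ((iμ-1)/2) Γ(1-β)⁻¹ R_β v`,
which is continuous on `[a, b]`. One application of the formula is then ordinary integration by
parts against `Φ_v` and against `Φ_u` (the boundary terms in `v` vanish), and the cross terms cancel
by the fractional integration by parts identities `∫ u' L_γ v + ∫ v' R_γ u = u(b) L_γ v(b)` for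
`v(a) = 0` and its mirror image for `v(b) = 0`. These follow from Fubini on the triangle
`a ≤ s ≤ t ≤ b` once an integration by parts in the kernel has traded the weakly singular
`(t-s)^{-γ}` acting on `v` for the continuous `(t-s)^{1-γ}` acting on `v'`. Iterating `i` times
gives the sign `(-1)^i`.
-/

open MeasureTheory intervalIntegral

open Set

theorem integral_integral_swap_triangle {E : Type*} [NormedAddCommGroup E] [NormedSpace ℝ E]
    {a b : ℝ} (hab : a ≤ b) {H : ℝ → ℝ → E} (hH : Continuous (Function.uncurry H)) :
    ∫ t in a..b, ∫ s in a..t, H t s = ∫ s in a..b, ∫ t in s..b, H t s := by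
  set μ := volume.restrict (Ioc a b)
  set G : ℝ × ℝ → E := {p | p.2 ≤ p.1}.indicator (Function.uncurry H)
  have hG : Integrable G (μ.prod μ) := by
    have hH' : IntegrableOn (Function.uncurry H) (Icc a b ×ˢ Icc a b) :=
      hH.continuousOn.integrableOn_compact (isCompact_Icc.prod isCompact_Icc)
    rw [Measure.prod_restrict, ← Measure.volume_eq_prod]
    exact (hH'.mono_set (prod_mono Ioc_subset_Icc_self Ioc_subset_Icc_self)).indicator
      (measurableSet_le measurable_snd measurable_fst)
  rw [integral_of_le hab, integral_of_le hab]
  convert integral_integral_swap (f := fun t s => G (t, s)) hG using 1 <;>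
    refine setIntegral_congr_fun measurableSet_Ioc fun x hx => ?_
  · rw [← integral_of_le hab]
    exact (intervalIntegral.integral_indicator ⟨hx.1.le, hx.2⟩).symm
  · show ∫ t in x..b, H t x = ∫ t in Ioc a b, (Ici x).indicator (fun t => H t x) t
    have hset : Ici x ∩ Ioc a b = Icc x b := by
      ext t; simp only [mem_inter_iff, mem_Ici, mem_Ioc, mem_Icc]; grind
    rw [MeasureTheory.integral_indicator measurableSet_Ici,
      Measure.restrict_restrict measurableSet_Ici, hset, integral_Icc_eq_integral_Ioc,
      integral_of_le hx.2]

theorem exists_continuous_hasDerivAt_of_contDiffOn_Icc {E : Type*} [NormedAddCommGroup E]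
    [NormedSpace ℝ E] {a b : ℝ} (hab : a < b) {u : ℝ → E} (hu : ContDiffOn ℝ 1 u (Icc a b)) :
    ∃ u' : ℝ → E, Continuous u' ∧ ∀ x ∈ Ioo a b, HasDerivAt u (u' x) x := by
  refine ⟨IccExtend hab.le ((Icc a b).domRestrict (derivWithin u (Icc a b))),
    ((hu.continuousOn_derivWithin (uniqueDiffOn_Icc hab) le_rfl).domRestrict).Icc_extend',
    fun x hx => ?_⟩
  rw [IccExtend_of_mem hab.le _ (Ioo_subset_Icc_self hx)]
  exact ((hu.differentiableOn one_ne_zero x (Ioo_subset_Icc_self hx)).hasDerivWithinAt).hasDerivAt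
    (Icc_mem_nhds hx.1 hx.2)

-- For `e = -α` this is `Γ(1 - α)` times the Riemann–Liouville integral of order `1 - α`.
noncomputable def leftKernelIntegral (a e : ℝ) (w : ℝ → ℂ) (t : ℝ) : ℂ :=
  ∫ s in a..t, ((t - s) ^ e : ℝ) • w s

noncomputable def rightKernelIntegral (b e : ℝ) (w : ℝ → ℂ) (t : ℝ) : ℂ :=
  ∫ s in t..b, ((s - t) ^ e : ℝ) • w s

section KernelIntegrals

variable {a b e γ : ℝ} {w w' : ℝ → ℂ}

theorem continuous_leftKernelIntegral (he : 0 ≤ e) (hw : Continuous w) :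
    Continuous (leftKernelIntegral a e w) :=
  have := Real.continuous_rpow_const he
  continuous_parametric_intervalIntegral_of_continuous (by fun_prop) continuous_id

theorem continuous_rightKernelIntegral (he : 0 ≤ e) (hw : Continuous w) :
    Continuous (rightKernelIntegral b e w) := by
  have := Real.continuous_rpow_const he
  have hsymm : rightKernelIntegral b e w = fun t => -∫ s in b..t, ((s - t) ^ e : ℝ) • w s :=
    funext fun t => integral_symm _ _
  rw [hsymm]
  exact (continuous_parametric_intervalIntegral_of_continuous (by fun_prop) continuous_id).neg

theorem leftKernelIntegral_one_sub_of_hasDerivAt (hγ : γ < 1) (hw : ContinuousOn w (Icc a b))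
    (hw' : ∀ x ∈ Ioo a b, HasDerivAt w (w' x) x) (hw'c : Continuous w') {t : ℝ}
    (ht : t ∈ Icc a b) :
    leftKernelIntegral a (1 - γ) w' t
      = (1 - γ) • leftKernelIntegral a (-γ) w t - ((t - a) ^ (1 - γ) : ℝ) • w a := by
  obtain ⟨hat, htb⟩ := ht
  have hIoo : Ioo (min a t) (max a t) = Ioo a t := by rw [min_eq_left hat, max_eq_right hat]
  have hker : ∀ r ∈ Ioo (min a t) (max a t), HasDerivAt (fun r : ℝ => (t - r) ^ (1 - γ))
      (-((1 - γ) * (t - r) ^ (-γ))) r := by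
    rw [hIoo]
    intro r hr
    convert ((hasDerivAt_id' r).const_sub t).rpow_const (p := 1 - γ)
      (Or.inl (by linarith [hr.2])) using 1
    rw [show 1 - γ - 1 = -γ by ring]
    ring
  have hker_int : IntervalIntegrable (fun r : ℝ => -((1 - γ) * (t - r) ^ (-γ))) volume a t := by
    have hrpow := intervalIntegrable_rpow' (a := t - a) (b := t - t) (r := -γ) (by linarith)
    have h := hrpow.comp_sub_left t
    simp only [sub_sub_cancel] at h
    exact (h.const_mul _).neg
  have := Real.continuous_rpow_const (by linarith : (0:ℝ) ≤ 1 - γ)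
  have hibp := integral_smul_deriv_eq_deriv_smul_of_hasDerivAt
    (u := fun r : ℝ => (t - r) ^ (1 - γ)) (by fun_prop)
    (hw.mono (by rw [uIcc_of_le hat]; exact Icc_subset_Icc_right htb)) hker
    (fun x hx => hw' x (Ioo_subset_Ioo_right htb (hIoo ▸ hx))) hker_int
    (hw'c.intervalIntegrable a t)
  simp only [sub_self, Real.zero_rpow (by linarith : (1:ℝ) - γ ≠ 0), zero_smul, zero_sub,
    neg_smul, intervalIntegral.integral_neg, mul_smul, intervalIntegral.integral_smul] at hibp
  rw [leftKernelIntegral, hibp, leftKernelIntegral]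
  abel

theorem rightKernelIntegral_one_sub_of_hasDerivAt (hγ : γ < 1) (hw : ContinuousOn w (Icc a b))
    (hw' : ∀ x ∈ Ioo a b, HasDerivAt w (w' x) x) (hw'c : Continuous w') {t : ℝ}
    (ht : t ∈ Icc a b) :
    rightKernelIntegral b (1 - γ) w' t
      = ((b - t) ^ (1 - γ) : ℝ) • w b - (1 - γ) • rightKernelIntegral b (-γ) w t := by
  obtain ⟨hat, htb⟩ := ht
  have hIoo : Ioo (min t b) (max t b) = Ioo t b := by rw [min_eq_left htb, max_eq_right htb]
  have hker : ∀ r ∈ Ioo (min t b) (max t b), HasDerivAt (fun r : ℝ => (r - t) ^ (1 - γ))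
      ((1 - γ) * (r - t) ^ (-γ)) r := by
    rw [hIoo]
    intro r hr
    convert ((hasDerivAt_id' r).sub_const t).rpow_const (p := 1 - γ)
      (Or.inl (by linarith [hr.1])) using 1
    rw [show 1 - γ - 1 = -γ by ring]
    ring
  have hker_int : IntervalIntegrable (fun r : ℝ => (1 - γ) * (r - t) ^ (-γ)) volume t b := by
    have hrpow := intervalIntegrable_rpow' (a := t - t) (b := b - t) (r := -γ) (by linarith)
    simpa using (hrpow.comp_sub_right t).const_mul (1 - γ)
  have := Real.continuous_rpow_const (by linarith : (0:ℝ) ≤ 1 - γ)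
  have hibp := integral_smul_deriv_eq_deriv_smul_of_hasDerivAt
    (u := fun r : ℝ => (r - t) ^ (1 - γ)) (by fun_prop)
    (hw.mono (by rw [uIcc_of_le htb]; exact Icc_subset_Icc_left hat)) hker
    (fun x hx => hw' x (Ioo_subset_Ioo_left hat (hIoo ▸ hx))) hker_int
    (hw'c.intervalIntegrable t b)
  simp only [sub_self, Real.zero_rpow (by linarith : (1:ℝ) - γ ≠ 0), zero_smul, sub_zero,
    mul_smul, intervalIntegral.integral_smul] at hibp
  rw [rightKernelIntegral, hibp, rightKernelIntegral]

theorem continuousOn_leftKernelIntegral (hγ : γ < 1) (hw : ContinuousOn w (Icc a b))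
    (hw' : ∀ x ∈ Ioo a b, HasDerivAt w (w' x) x) (hw'c : Continuous w') :
    ContinuousOn (leftKernelIntegral a (-γ) w) (Icc a b) := by
  have := continuous_leftKernelIntegral (a := a) (by linarith : (0:ℝ) ≤ 1 - γ) hw'c
  have := Real.continuous_rpow_const (by linarith : (0:ℝ) ≤ 1 - γ)
  refine (show Continuous fun t => (1 - γ)⁻¹ •
      (leftKernelIntegral a (1 - γ) w' t + ((t - a) ^ (1 - γ) : ℝ) • w a) by fun_prop)
    |>.continuousOn.congr fun t ht => ?_
  dsimp only
  rw [leftKernelIntegral_one_sub_of_hasDerivAt hγ hw hw' hw'c ht, sub_add_cancel,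
    inv_smul_smul₀ (by linarith : (1:ℝ) - γ ≠ 0)]

theorem continuousOn_rightKernelIntegral (hγ : γ < 1) (hw : ContinuousOn w (Icc a b))
    (hw' : ∀ x ∈ Ioo a b, HasDerivAt w (w' x) x) (hw'c : Continuous w') :
    ContinuousOn (rightKernelIntegral b (-γ) w) (Icc a b) := by
  have := continuous_rightKernelIntegral (b := b) (by linarith : (0:ℝ) ≤ 1 - γ) hw'c
  have := Real.continuous_rpow_const (by linarith : (0:ℝ) ≤ 1 - γ)
  refine (show Continuous fun t => (1 - γ)⁻¹ •
      (((b - t) ^ (1 - γ) : ℝ) • w b - rightKernelIntegral b (1 - γ) w' t) by fun_prop)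
    |>.continuousOn.congr fun t ht => ?_
  dsimp only
  rw [rightKernelIntegral_one_sub_of_hasDerivAt hγ hw hw' hw'c ht, sub_sub_cancel,
    inv_smul_smul₀ (by linarith : (1:ℝ) - γ ≠ 0)]

theorem integral_mul_leftKernelIntegral (hab : a ≤ b) (he : 0 ≤ e) {φ ψ : ℝ → ℂ}
    (hφ : Continuous φ) (hψ : Continuous ψ) :
    ∫ t in a..b, φ t * leftKernelIntegral a e ψ t
      = ∫ t in a..b, ψ t * rightKernelIntegral b e φ t := by
  have := Real.continuous_rpow_const he
  simp only [leftKernelIntegral, rightKernelIntegral, ← intervalIntegral.integral_const_mul]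
  rw [integral_integral_swap_triangle hab (by fun_prop)]
  refine integral_congr fun s _ => integral_congr fun t _ => ?_
  simp only [Complex.real_smul]
  ring

end KernelIntegrals

section FractionalIntegrationByParts

variable {a b γ : ℝ} {u u' v v' : ℝ → ℂ}

theorem integral_deriv_mul_leftKernelIntegral_add (hab : a ≤ b) (hγ : γ < 1)
    (hu : ContinuousOn u (Icc a b)) (hu' : ∀ x ∈ Ioo a b, HasDerivAt u (u' x) x)
    (hu'c : Continuous u') (hv : ContinuousOn v (Icc a b))
    (hv' : ∀ x ∈ Ioo a b, HasDerivAt v (v' x) x) (hv'c : Continuous v') (hva : v a = 0) :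
    (∫ t in a..b, u' t * leftKernelIntegral a (-γ) v t)
        + ∫ t in a..b, v' t * rightKernelIntegral b (-γ) u t
      = u b * leftKernelIntegral a (-γ) v b := by
  have hv_rep : ∀ t ∈ Icc a b,
      (1 - γ) • leftKernelIntegral a (-γ) v t = leftKernelIntegral a (1 - γ) v' t := fun t ht => by
    rw [leftKernelIntegral_one_sub_of_hasDerivAt hγ hv hv' hv'c ht, hva, smul_zero, sub_zero]
  have hR : IntervalIntegrable (fun t => v' t * rightKernelIntegral b (-γ) u t) volume a b :=
    (hv'c.continuousOn.mul
      (continuousOn_rightKernelIntegral hγ hu hu' hu'c)).intervalIntegrable_of_Icc hab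
  have := Real.continuous_rpow_const (by linarith : (0:ℝ) ≤ 1 - γ)
  have hsplit : ∫ t in a..b, v' t * rightKernelIntegral b (1 - γ) u' t
      = (∫ t in a..b, v' t * (((b - t) ^ (1 - γ) : ℝ) • u b))
        - (1 - γ) • ∫ t in a..b, v' t * rightKernelIntegral b (-γ) u t := by
    rw [← intervalIntegral.integral_smul, ← intervalIntegral.integral_sub]
    · refine integral_congr fun t ht => ?_
      rw [uIcc_of_le hab] at ht
      simp only [rightKernelIntegral_one_sub_of_hasDerivAt hγ hu hu' hu'c ht, mul_sub,
        mul_smul_comm]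
    · apply Continuous.intervalIntegrable; fun_prop
    · exact hR.smul (1 - γ)
  apply smul_right_injective ℂ (by linarith : (1:ℝ) - γ ≠ 0)
  calc (1 - γ) • ((∫ t in a..b, u' t * leftKernelIntegral a (-γ) v t)
        + ∫ t in a..b, v' t * rightKernelIntegral b (-γ) u t)
      = (∫ t in a..b, u' t * leftKernelIntegral a (1 - γ) v' t)
        + (1 - γ) • ∫ t in a..b, v' t * rightKernelIntegral b (-γ) u t := by
        rw [smul_add, ← intervalIntegral.integral_smul]
        congr 1
        refine integral_congr fun t ht => ?_
        rw [uIcc_of_le hab] at ht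
        rw [← hv_rep t ht, mul_smul_comm]
    _ = ∫ t in a..b, v' t * (((b - t) ^ (1 - γ) : ℝ) • u b) := by
        rw [integral_mul_leftKernelIntegral hab (by linarith) hu'c hv'c, hsplit, sub_add_cancel]
    _ = (1 - γ) • (u b * leftKernelIntegral a (-γ) v b) := by
        rw [← mul_smul_comm, hv_rep b ⟨hab, le_rfl⟩, leftKernelIntegral,
          ← intervalIntegral.integral_const_mul]
        refine integral_congr fun t _ => ?_
        simp only [Complex.real_smul]
        ring

theorem integral_deriv_mul_rightKernelIntegral_add (hab : a ≤ b) (hγ : γ < 1)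
    (hu : ContinuousOn u (Icc a b)) (hu' : ∀ x ∈ Ioo a b, HasDerivAt u (u' x) x)
    (hu'c : Continuous u') (hv : ContinuousOn v (Icc a b))
    (hv' : ∀ x ∈ Ioo a b, HasDerivAt v (v' x) x) (hv'c : Continuous v') (hvb : v b = 0) :
    (∫ t in a..b, u' t * rightKernelIntegral b (-γ) v t)
        + ∫ t in a..b, v' t * leftKernelIntegral a (-γ) u t
      = -(u a * rightKernelIntegral b (-γ) v a) := by
  have hv_rep : ∀ t ∈ Icc a b,
      (1 - γ) • rightKernelIntegral b (-γ) v t = -rightKernelIntegral b (1 - γ) v' t :=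
    fun t ht => by
      rw [rightKernelIntegral_one_sub_of_hasDerivAt hγ hv hv' hv'c ht, hvb, smul_zero, zero_sub,
        neg_neg]
  have hL : IntervalIntegrable (fun t => v' t * leftKernelIntegral a (-γ) u t) volume a b :=
    (hv'c.continuousOn.mul
      (continuousOn_leftKernelIntegral hγ hu hu' hu'c)).intervalIntegrable_of_Icc hab
  have := Real.continuous_rpow_const (by linarith : (0:ℝ) ≤ 1 - γ)
  have hsplit : ∫ t in a..b, v' t * leftKernelIntegral a (1 - γ) u' t
      = (1 - γ) • (∫ t in a..b, v' t * leftKernelIntegral a (-γ) u t)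
        - ∫ t in a..b, v' t * (((t - a) ^ (1 - γ) : ℝ) • u a) := by
    rw [← intervalIntegral.integral_smul, ← intervalIntegral.integral_sub]
    · refine integral_congr fun t ht => ?_
      rw [uIcc_of_le hab] at ht
      simp only [leftKernelIntegral_one_sub_of_hasDerivAt hγ hu hu' hu'c ht, mul_sub,
        mul_smul_comm]
    · exact hL.smul (1 - γ)
    · apply Continuous.intervalIntegrable; fun_prop
  apply smul_right_injective ℂ (by linarith : (1:ℝ) - γ ≠ 0)
  calc (1 - γ) • ((∫ t in a..b, u' t * rightKernelIntegral b (-γ) v t)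
        + ∫ t in a..b, v' t * leftKernelIntegral a (-γ) u t)
      = -(∫ t in a..b, u' t * rightKernelIntegral b (1 - γ) v' t)
        + (1 - γ) • ∫ t in a..b, v' t * leftKernelIntegral a (-γ) u t := by
        rw [smul_add, ← intervalIntegral.integral_smul, ← intervalIntegral.integral_neg]
        congr 1
        refine integral_congr fun t ht => ?_
        rw [uIcc_of_le hab] at ht
        rw [← mul_neg, ← hv_rep t ht, mul_smul_comm]
    _ = ∫ t in a..b, v' t * (((t - a) ^ (1 - γ) : ℝ) • u a) := by
        rw [← integral_mul_leftKernelIntegral hab (by linarith) hv'c hu'c, hsplit]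
        abel
    _ = (1 - γ) • -(u a * rightKernelIntegral b (-γ) v a) := by
        rw [smul_neg, ← mul_smul_comm, hv_rep a ⟨le_rfl, hab⟩, mul_neg, neg_neg,
          rightKernelIntegral, ← intervalIntegral.integral_const_mul]
        refine integral_congr fun t _ => ?_
        simp only [Complex.real_smul]
        ring

end FractionalIntegrationByParts

-- The coefficients come from `½(L − R) + (iμ/2)(L + R) = ((1 + iμ)/2) L + ((iμ − 1)/2) R`,
-- with `R = -Γ(1 - β)⁻¹ (d/dt) rightKernelIntegral b (-β)`.
noncomputable def DfracPotential (a b α β : ℝ) (μ : ℂ) (v : ℝ → ℂ) (t : ℝ) : ℂ :=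
  (1 / 2 + Complex.I * μ / 2) * ((Real.Gamma (1 - α))⁻¹ • leftKernelIntegral a (-α) v t)
    - (Complex.I * μ / 2 - 1 / 2) * ((Real.Gamma (1 - β))⁻¹ • rightKernelIntegral b (-β) v t)

section DfracPotential

variable {a b α β : ℝ} {v v' : ℝ → ℂ}

theorem hasDerivAt_DfracPotential (μ : ℂ) (hv : HasRLpair a b α β v) {t : ℝ}
    (ht : t ∈ Ioo a b) :
    HasDerivAt (DfracPotential a b α β μ v) (Dfrac a b α β μ v t) t := by
  have hL := ((hv.1 t ht).hasDerivAt.const_smul (Real.Gamma (1 - α))⁻¹).const_mul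
    (1 / 2 + Complex.I * μ / 2)
  have hR := ((hv.2 t ht).hasDerivAt.const_smul (Real.Gamma (1 - β))⁻¹).const_mul
    (Complex.I * μ / 2 - 1 / 2)
  refine (hL.sub hR).congr_deriv ?_
  simp only [Dfrac, RLlC, RLrC, Complex.real_smul]
  ring

theorem continuousOn_DfracPotential (hα : α < 1) (hβ : β < 1) (μ : ℂ)
    (hv : ContinuousOn v (Icc a b)) (hv' : ∀ x ∈ Ioo a b, HasDerivAt v (v' x) x)
    (hv'c : Continuous v') :
    ContinuousOn (DfracPotential a b α β μ v) (Icc a b) := by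
  have := continuousOn_leftKernelIntegral hα hv hv' hv'c
  have := continuousOn_rightKernelIntegral hβ hv hv' hv'c
  unfold DfracPotential
  fun_prop

theorem integral_mul_DfracPotential (hab : a ≤ b) (hα : α < 1) (hβ : β < 1) (μ : ℂ)
    (hv : ContinuousOn v (Icc a b)) (hv' : ∀ x ∈ Ioo a b, HasDerivAt v (v' x) x)
    (hv'c : Continuous v') {φ : ℝ → ℂ} (hφ : ContinuousOn φ (Icc a b)) :
    ∫ t in a..b, φ t * DfracPotential a b α β μ v t
      = (1 / 2 + Complex.I * μ / 2) * (Real.Gamma (1 - α) : ℂ)⁻¹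
          * (∫ t in a..b, φ t * leftKernelIntegral a (-α) v t)
        - (Complex.I * μ / 2 - 1 / 2) * (Real.Gamma (1 - β) : ℂ)⁻¹
          * ∫ t in a..b, φ t * rightKernelIntegral b (-β) v t := by
  rw [← intervalIntegral.integral_const_mul, ← intervalIntegral.integral_const_mul,
    ← intervalIntegral.integral_sub]
  · refine integral_congr fun t _ => ?_
    simp only [DfracPotential, Complex.real_smul, Complex.ofReal_inv]
    ring
  · exact ((hφ.mul (continuousOn_leftKernelIntegral hα hv hv' hv'c)).intervalIntegrable_of_Icc
      hab).const_mul _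
  · exact ((hφ.mul (continuousOn_rightKernelIntegral hβ hv hv' hv'c)).intervalIntegrable_of_Icc
      hab).const_mul _

end DfracPotential

theorem integral_mul_Dfrac_eq_neg {a b α β : ℝ} (hab : a < b) (hα : α < 1) (hβ : β < 1) (μ : ℂ)
    {u v : ℝ → ℂ} (hu : ContDiffOn ℝ 1 u (Icc a b)) (hv : ContDiffOn ℝ 1 v (Icc a b))
    (hva : v a = 0) (hvb : v b = 0) (hvex : HasRLpair a b α β v) (huex : HasRLpair a b β α u)
    (hvint : IntervalIntegrable (fun t => u t * Dfrac a b α β μ v t) volume a b)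
    (huint : IntervalIntegrable (fun t => Dfrac a b β α (-μ) u t * v t) volume a b) :
    ∫ t in a..b, u t * Dfrac a b α β μ v t = -∫ t in a..b, Dfrac a b β α (-μ) u t * v t := by
  obtain ⟨u', hu'c, hu'⟩ := exists_continuous_hasDerivAt_of_contDiffOn_Icc hab hu
  obtain ⟨v', hv'c, hv'⟩ := exists_continuous_hasDerivAt_of_contDiffOn_Icc hab hv
  have huc := hu.continuousOn
  have hvc := hv.continuousOn
  have hΦ := continuousOn_DfracPotential hα hβ μ hvc hv' hv'c
  have hΨ := continuousOn_DfracPotential hβ hα (-μ) huc hu' hu'c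
  have hibp_u : ∫ t in a..b, u t * Dfrac a b α β μ v t
      = u b * DfracPotential a b α β μ v b - u a * DfracPotential a b α β μ v a
        - ∫ t in a..b, u' t * DfracPotential a b α β μ v t := by
    have hu'Φ : IntervalIntegrable (fun t => u' t * DfracPotential a b α β μ v t) volume a b :=
      (hu'c.continuousOn.mul hΦ).intervalIntegrable_of_Icc hab.le
    have := integral_eq_sub_of_hasDeriv_right_of_le hab.le (huc.mul hΦ)
      (fun t ht => ((hu' t ht).mul (hasDerivAt_DfracPotential μ hvex ht)).hasDerivWithinAt)
      (hu'Φ.add hvint)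
    rw [intervalIntegral.integral_add hu'Φ hvint, Pi.mul_apply, Pi.mul_apply] at this
    linear_combination this
  have hibp_v : ∫ t in a..b, Dfrac a b β α (-μ) u t * v t
      = -∫ t in a..b, v' t * DfracPotential a b β α (-μ) u t := by
    have hΨv' : IntervalIntegrable (fun t => DfracPotential a b β α (-μ) u t * v' t) volume a b :=
      (hΨ.mul hv'c.continuousOn).intervalIntegrable_of_Icc hab.le
    have := integral_eq_sub_of_hasDeriv_right_of_le hab.le (hΨ.mul hvc)
      (fun t ht => ((hasDerivAt_DfracPotential (-μ) huex ht).mul (hv' t ht)).hasDerivWithinAt)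
      (huint.add hΨv')
    rw [intervalIntegral.integral_add huint hΨv', Pi.mul_apply, Pi.mul_apply, hva, hvb, mul_zero,
      mul_zero, sub_zero] at this
    simp only [mul_comm (v' _)]
    linear_combination this
  have hleft := integral_deriv_mul_leftKernelIntegral_add hab.le hα huc hu' hu'c hvc hv' hv'c hva
  have hright := integral_deriv_mul_rightKernelIntegral_add hab.le hβ huc hu' hu'c hvc hv' hv'c hvb
  rw [hibp_u, hibp_v, integral_mul_DfracPotential hab.le hα hβ μ hvc hv' hv'c hu'c.continuousOn,
    integral_mul_DfracPotential hab.le hβ hα (-μ) huc hu' hu'c hv'c.continuousOn]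
  simp only [DfracPotential, leftKernelIntegral, rightKernelIntegral, integral_same, smul_zero,
    mul_zero, Complex.real_smul, Complex.ofReal_inv] at hleft hright ⊢
  linear_combination (-(1 / 2 + Complex.I * μ / 2) * (Real.Gamma (1 - α) : ℂ)⁻¹) * hleft
    + ((Complex.I * μ / 2 - 1 / 2) * (Real.Gamma (1 - β) : ℂ)⁻¹) * hright

theorem pairing_iterate_eq_neg_one_pow_mul {X Y R : Type*} [Ring R] (B : X → Y → R)
    (D : Y → Y) (D' : X → X) (f : X) (g : Y) (i : ℕ)
    (h : ∀ k < i, B (D'^[k] f) (D (D^[i - (k + 1)] g)) = -B (D' (D'^[k] f)) (D^[i - (k + 1)] g)) :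
    B f (D^[i] g) = (-1) ^ i * B (D'^[i] f) g := by
  suffices ∀ j ≤ i, B f (D^[i] g) = (-1) ^ j * B (D'^[j] f) (D^[i - j] g) by
    simpa using this i le_rfl
  intro j hj
  induction j with
  | zero => simp
  | succ k ih =>
    rw [ih (by omega), show i - k = i - (k + 1) + 1 by omega, Function.iterate_succ_apply',
      h k (by omega), ← Function.iterate_succ_apply' D', pow_succ, mul_neg_one, neg_mul, mul_neg]

theorem stmt13_general {a b : ℝ} (hab : a < b) {α β : ℝ}
    (hα : α ∈ Set.Ioo (0 : ℝ) 1) (hβ : β ∈ Set.Ioo (0 : ℝ) 1) (μ : ℂ)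
    {i : ℕ} (f g : ℝ → ℝ)
    (hgd : ∀ j < i, ContDiffOn ℝ 1
      ((Dfrac a b α β μ)^[j] fun s => ((g s : ℝ) : ℂ)) (Set.Icc a b))
    (hfd : ∀ j < i, ContDiffOn ℝ 1
      ((Dfrac a b β α (-μ))^[j] fun s => ((f s : ℝ) : ℂ)) (Set.Icc a b))
    (hgex : ∀ j < i, HasRLpair a b α β ((Dfrac a b α β μ)^[j] fun s => ((g s : ℝ) : ℂ)))
    (hfex : ∀ j < i, HasRLpair a b β α ((Dfrac a b β α (-μ))^[j] fun s => ((f s : ℝ) : ℂ)))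
    (hint : ∀ j ≤ i, IntervalIntegrable
      (fun t => ((Dfrac a b β α (-μ))^[j] (fun s => ((f s : ℝ) : ℂ)) t)
        * ((Dfrac a b α β μ)^[i - j] (fun s => ((g s : ℝ) : ℂ)) t)) volume a b)
    (hbc : ∀ j < i, (Dfrac a b α β μ)^[j] (fun s => ((g s : ℝ) : ℂ)) a = 0 ∧
      (Dfrac a b α β μ)^[j] (fun s => ((g s : ℝ) : ℂ)) b = 0) :
    ∫ t in a..b, ((f t : ℝ) : ℂ) * (Dfrac a b α β μ)^[i] (fun s => ((g s : ℝ) : ℂ)) t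
      = (-1 : ℂ) ^ i *
        ∫ t in a..b, ((Dfrac a b β α (-μ))^[i] (fun s => ((f s : ℝ) : ℂ)) t) * ((g t : ℝ) : ℂ) := by
  refine pairing_iterate_eq_neg_one_pow_mul (fun u v => ∫ t in a..b, u t * v t)
    (Dfrac a b α β μ) (Dfrac a b β α (-μ)) _ _ i fun k hk => ?_
  have hk' : i - (k + 1) < i := by omega
  have hint_k := hint k hk.le
  rw [show i - k = i - (k + 1) + 1 by omega, Function.iterate_succ_apply'] at hint_k
  have hint_k1 := hint (k + 1) hk
  rw [Function.iterate_succ_apply'] at hint_k1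
  exact integral_mul_Dfrac_eq_neg hab hα.2 hβ.2 μ (hfd k hk) (hgd _ hk') (hbc _ hk').1
    (hbc _ hk').2 (hgex _ hk') (hfex k hk) hint_k hint_k1

theorem stmt13 {a b : ℝ} (hab : a < b) {α β : ℝ}
    (hα : α ∈ Set.Ioo (0 : ℝ) 1) (hβ : β ∈ Set.Ioo (0 : ℝ) 1) (μ : ℂ)
    {i : ℕ} (hi : 1 ≤ i) (f g : ℝ → ℝ)
    (hgc : ∀ j ≤ i, ContinuousOn
      ((Dfrac a b α β μ)^[j] fun s => ((g s : ℝ) : ℂ)) (Set.Ioo a b))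
    (hfc : ∀ j ≤ i, ContinuousOn
      ((Dfrac a b β α (-μ))^[j] fun s => ((f s : ℝ) : ℂ)) (Set.Ioo a b))
    (hgd : ∀ j < i, ContDiffOn ℝ 1
      ((Dfrac a b α β μ)^[j] fun s => ((g s : ℝ) : ℂ)) (Set.Icc a b))
    (hfd : ∀ j < i, ContDiffOn ℝ 1
      ((Dfrac a b β α (-μ))^[j] fun s => ((f s : ℝ) : ℂ)) (Set.Icc a b))
    (hgex : ∀ j < i, HasRLpair a b α β ((Dfrac a b α β μ)^[j] fun s => ((g s : ℝ) : ℂ)))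
    (hfex : ∀ j < i, HasRLpair a b β α ((Dfrac a b β α (-μ))^[j] fun s => ((f s : ℝ) : ℂ)))
    (hint : ∀ j ≤ i, IntervalIntegrable
      (fun t => ((Dfrac a b β α (-μ))^[j] (fun s => ((f s : ℝ) : ℂ)) t)
        * ((Dfrac a b α β μ)^[i - j] (fun s => ((g s : ℝ) : ℂ)) t)) volume a b)
    (hbc : ∀ j < i, (Dfrac a b α β μ)^[j] (fun s => ((g s : ℝ) : ℂ)) a = 0 ∧
      (Dfrac a b α β μ)^[j] (fun s => ((g s : ℝ) : ℂ)) b = 0) :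
    ∫ t in a..b, ((f t : ℝ) : ℂ) * (Dfrac a b α β μ)^[i] (fun s => ((g s : ℝ) : ℂ)) t
      = (-1 : ℂ) ^ i *
        ∫ t in a..b, ((Dfrac a b β α (-μ))^[i] (fun s => ((f s : ℝ) : ℂ)) t) * ((g t : ℝ) : ℂ) :=
  stmt13_general hab hα hβ μ f g hgd hfd hgex hfex hint hbc
end

section
/- Let ρ > 0, T > 0, α > 0, and let u : ℝ × ℝ → ℝ be such that for each x ∈ ℝ the function t ↦ u(t, x) is smooth with compact support, and for each t ∈ ℝ the function x ↦ u(t, x) is twice differentiable. Then 𝔻^α(𝔻^α u(·, x))(t) = (𝔻^{2α} u(·, x))(t) for all (t, x); consequently, u satisfies the 𝔻^α-fractionally embedded continuous Euler–Lagrange equation −ρ·𝔻^α(𝔻^α u(·, x))(t) = T·∂²u/∂x²(t, x) for all (t, x) if and only if u satisfies the Schneider–Wyss fractional wave equation of order α: −ρ·(𝔻^{2α} u(·, x))(t) = T·∂²u/∂x²(t, x) for all (t, x). -/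
open MeasureTheory

open MeasureTheory Set Filter

noncomputable def kk (σ : ℝ) : ℝ → ℝ := (Set.Ioi (0:ℝ)).indicator fun r => r ^ (σ - 1)

lemma kk_pos {σ r : ℝ} (h : 0 < r) : kk σ r = r ^ (σ - 1) := Set.indicator_of_mem h _

lemma kk_zero {σ r : ℝ} (h : r ≤ 0) : kk σ r = 0 :=
  Set.indicator_of_notMem (by simpa using h) _

lemma kk_nonneg (σ r : ℝ) : 0 ≤ kk σ r :=
  Set.indicator_nonneg (fun r hr => Real.rpow_nonneg (le_of_lt hr) _) r

lemma kk_meas (σ : ℝ) : Measurable (kk σ) :=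
  Measurable.indicator (by measurability) measurableSet_Ioi

lemma kk_norm (σ : ℝ) : (fun r => ‖kk σ r‖) = kk σ :=
  funext fun r => Real.norm_of_nonneg (kk_nonneg σ r)

lemma kk_integrableOn_Ioc {σ : ℝ} (hσ : 0 < σ) {M : ℝ} :
    IntegrableOn (fun r : ℝ => r ^ (σ - 1)) (Set.Ioc 0 M) := by
  rcases le_or_gt M 0 with h | h
  · rw [Set.Ioc_eq_empty (by linarith)]; exact integrableOn_empty
  · exact (intervalIntegrable_iff_integrableOn_Ioc_of_le h.le).1
      (intervalIntegral.intervalIntegrable_rpow' (by linarith))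

lemma kk_locInt {σ : ℝ} (hσ : 0 < σ) : LocallyIntegrable (kk σ) volume := by
  rw [locallyIntegrable_iff]
  intro K hK
  obtain ⟨M, hM⟩ := hK.isBounded.subset_ball 0
  have h1 : IntegrableOn (kk σ) (Metric.ball 0 M) := by
    rw [Real.ball_eq_Ioo, zero_sub, zero_add]
    have : IntegrableOn (kk σ) (Set.Ioc (-M) M) := by
      rw [IntegrableOn, kk, integrable_indicator_iff measurableSet_Ioi, IntegrableOn,
        Measure.restrict_restrict measurableSet_Ioi]
      have : Set.Ioi (0:ℝ) ∩ Set.Ioc (-M) M ⊆ Set.Ioc 0 M := fun r hr => ⟨hr.1, hr.2.2⟩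
      exact (kk_integrableOn_Ioc hσ).mono_set this
    exact this.mono_set Set.Ioo_subset_Ioc_self
  exact h1.mono_set hM


open Convolution

local notation:70 f " ⊛ " g => convolution f g (ContinuousLinearMap.mul ℝ ℝ) volume

lemma conv_apply_eq (σ : ℝ) (x : ℝ → ℝ) (τ : ℝ) :
    (kk σ ⊛ x) τ = ∫ s in Set.Iic τ, (τ - s) ^ (σ - 1) * x s := by
  rw [convolution_def]
  simp only [ContinuousLinearMap.mul_apply']
  rw [integral_Iic_eq_integral_Iio, ← integral_indicator measurableSet_Iio]
  have h1 : ∀ s : ℝ, (Set.Iio τ).indicator (fun s => (τ - s) ^ (σ - 1) * x s) s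
      = (fun r => kk σ r * x (τ - r)) (τ - s) := by
    intro s
    by_cases hs : s < τ
    · rw [Set.indicator_of_mem (show s ∈ Set.Iio τ from hs)]
      show _ = kk σ (τ - s) * x (τ - (τ - s))
      rw [kk_pos (by linarith : (0:ℝ) < τ - s), sub_sub_cancel]
    · rw [Set.indicator_of_notMem (show s ∉ Set.Iio τ from hs)]
      show _ = kk σ (τ - s) * x (τ - (τ - s))
      rw [kk_zero (by linarith [not_lt.1 hs] : τ - s ≤ 0), zero_mul]
  rw [funext h1, integral_sub_left_eq_self (fun r => kk σ r * x (τ - r)) volume τ]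

lemma smooth_cs_deriv {y : ℝ → ℝ} (hy : ContDiff ℝ (⊤:ℕ∞) y) (hcy : HasCompactSupport y) :
    ContDiff ℝ (⊤:ℕ∞) (deriv y) ∧ HasCompactSupport (deriv y) :=
  ⟨(contDiff_infty_iff_deriv.1 hy).2, hcy.deriv⟩

lemma smooth_cs_itd {y : ℝ → ℝ} (hy : ContDiff ℝ (⊤:ℕ∞) y) (hcy : HasCompactSupport y) (n : ℕ) :
    ContDiff ℝ (⊤:ℕ∞) (iteratedDeriv n y) ∧ HasCompactSupport (iteratedDeriv n y) := by
  induction n with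
  | zero => simpa [iteratedDeriv_zero] using ⟨hy, hcy⟩
  | succ n ih => rw [iteratedDeriv_succ]; exact smooth_cs_deriv ih.1 ih.2

lemma conv_deriv {σ : ℝ} (hσ : 0 < σ) {y : ℝ → ℝ} (hy : ContDiff ℝ (⊤:ℕ∞) y)
    (hcy : HasCompactSupport y) :
    deriv (kk σ ⊛ y) = (kk σ ⊛ deriv y) :=
  funext fun t => (HasCompactSupport.hasDerivAt_convolution_right
    (ContinuousLinearMap.mul ℝ ℝ) (kk_locInt hσ) hcy (hy.of_le (by exact_mod_cast le_top)) t).deriv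

lemma conv_itd {σ : ℝ} (hσ : 0 < σ) :
    ∀ (n : ℕ) (y : ℝ → ℝ), ContDiff ℝ (⊤:ℕ∞) y → HasCompactSupport y →
      iteratedDeriv n (kk σ ⊛ y) = (kk σ ⊛ iteratedDeriv n y) := by
  intro n
  induction n with
  | zero => intro y _ _; simp [iteratedDeriv_zero]
  | succ n ih =>
    intro y hy hcy
    rw [iteratedDeriv_succ', conv_deriv hσ hy hcy,
      ih (deriv y) (smooth_cs_deriv hy hcy).1 (smooth_cs_deriv hy hcy).2, ← iteratedDeriv_succ']

lemma itd_itd (m k : ℕ) (f : ℝ → ℝ) :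
    iteratedDeriv m (iteratedDeriv k f) = iteratedDeriv (m + k) f := by
  induction m generalizing k with
  | zero => simp
  | succ m ih =>
    have h : m + 1 + k = m + (k + 1) := by omega
    rw [iteratedDeriv_succ', ← iteratedDeriv_succ, ih (k+1), h]

lemma itd_const_mul (c : ℝ) {f : ℝ → ℝ} (hf : ContDiff ℝ (⊤:ℕ∞) f) (n : ℕ) :
    iteratedDeriv n (fun τ => c * f τ) = fun t => c * iteratedDeriv n f t := by
  induction n generalizing f with
  | zero => simp
  | succ n ih =>
    rw [iteratedDeriv_succ', iteratedDeriv_succ']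
    have h1 : deriv (fun τ => c * f τ) = fun τ => c * deriv f τ :=
      funext fun τ => deriv_const_mul c (hf.differentiable (by simp) τ)
    rw [h1, ih (contDiff_infty_iff_deriv.1 hf).2]

/-- Left fractional derivative of order `γ > 0`: with `n = ⌊γ⌋ + 1` (the smallest integer
with `γ < n ≤ γ + 1`) and `σ = n − γ`,
`(𝔻^γ x)(t) = (1/Γ(σ)) (d/dt)^n ∫_{−∞}^t (t−s)^(σ−1) x(s) ds`. -/
noncomputable def Dl (γ : ℝ) (x : ℝ → ℝ) (t : ℝ) : ℝ :=
  (Real.Gamma ((⌊γ⌋₊ : ℝ) + 1 - γ))⁻¹ *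
    iteratedDeriv (⌊γ⌋₊ + 1)
      (fun τ => ∫ s in Set.Iic τ, (τ - s) ^ ((⌊γ⌋₊ : ℝ) - γ) * x s) t

lemma sigma_pos (γ : ℝ) : 0 < (⌊γ⌋₊ : ℝ) + 1 - γ := by
  have := Nat.lt_floor_add_one γ
  linarith

lemma Dl_eq (γ : ℝ) {x : ℝ → ℝ} (hx : ContDiff ℝ (⊤:ℕ∞) x) (hcx : HasCompactSupport x)
    (t : ℝ) :
    Dl γ x t = (Real.Gamma ((⌊γ⌋₊ : ℝ) + 1 - γ))⁻¹ *
      (kk ((⌊γ⌋₊ : ℝ) + 1 - γ) ⊛ iteratedDeriv (⌊γ⌋₊ + 1) x) t := by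
  unfold Dl
  congr 1
  have h1 : (fun τ => ∫ s in Set.Iic τ, (τ - s) ^ ((⌊γ⌋₊ : ℝ) - γ) * x s)
      = (kk ((⌊γ⌋₊ : ℝ) + 1 - γ) ⊛ x) := by
    funext τ
    rw [conv_apply_eq]
    congr 1
    ext s
    congr 1
    ring_nf
  rw [h1, conv_itd (sigma_pos γ) _ x hx hcx]

lemma integrableOn_kernel_mul {σ : ℝ} (hσ : 0 < σ) {y : ℝ → ℝ} (hy : Continuous y)
    (hcy : HasCompactSupport y) (t : ℝ) :
    IntegrableOn (fun r => r ^ (σ - 1) * y (t - r)) (Set.Ioi 0) := by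
  have h := HasCompactSupport.convolutionExists_right (ContinuousLinearMap.mul ℝ ℝ)
    hcy (kk_locInt hσ) hy t
  have h2 : Integrable (fun r => kk σ r * y (t - r)) volume := h
  rw [← integrable_indicator_iff measurableSet_Ioi]
  apply h2.congr
  filter_upwards with r
  by_cases hr : 0 < r
  · rw [kk_pos hr, Set.indicator_of_mem (show r ∈ Set.Ioi (0:ℝ) from hr)]
  · rw [kk_zero (not_lt.1 hr), Set.indicator_of_notMem (show r ∉ Set.Ioi (0:ℝ) from hr), zero_mul]

lemma conv_to_Ioi {σ : ℝ} (y : ℝ → ℝ) (t : ℝ) :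
    (kk σ ⊛ y) t = ∫ r in Set.Ioi 0, r ^ (σ - 1) * y (t - r) := by
  rw [convolution_def]
  simp only [ContinuousLinearMap.mul_apply']
  rw [← integral_indicator measurableSet_Ioi]
  congr 1
  funext r
  by_cases hr : 0 < r
  · rw [kk_pos hr, Set.indicator_of_mem (show r ∈ Set.Ioi (0:ℝ) from hr)]
  · rw [kk_zero (not_lt.1 hr), Set.indicator_of_notMem (show r ∉ Set.Ioi (0:ℝ) from hr), zero_mul]
lemma conv_step {σ : ℝ} (hσ : 0 < σ) {y : ℝ → ℝ} (hy : ContDiff ℝ (⊤:ℕ∞) y)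
    (hcy : HasCompactSupport y) (t : ℝ) :
    (kk (σ + 1) ⊛ deriv y) t = σ * (kk σ ⊛ y) t := by
  have hyc : Continuous y := hy.continuous
  have hdy : ContDiff ℝ (⊤:ℕ∞) (deriv y) := (contDiff_infty_iff_deriv.1 hy).2
  have hdyc : Continuous (deriv y) := hdy.continuous
  have hcdy : HasCompactSupport (deriv y) := hcy.deriv
  obtain ⟨R, hR⟩ := hcy.isBounded.subset_ball 0
  have hyzero : ∀ u : ℝ, |R| ≤ |u| → y u = 0 := by
    intro u hu
    apply image_eq_zero_of_notMem_tsupport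
    intro hmem
    have := hR hmem
    rw [Metric.mem_ball, dist_zero_right, Real.norm_eq_abs] at this
    have : |u| < |R| := lt_of_lt_of_le this (le_abs_self R)
    linarith
  -- integrabilities
  have I1 : IntegrableOn (fun r => r ^ (σ - 1) * y (t - r)) (Set.Ioi 0) :=
    integrableOn_kernel_mul hσ hyc hcy t
  have I2 : IntegrableOn (fun r => r ^ σ * deriv y (t - r)) (Set.Ioi 0) := by
    have := integrableOn_kernel_mul (by linarith : (0:ℝ) < σ + 1) hdyc hcdy t
    simpa [add_sub_cancel_right] using this
  have A' : IntegrableOn (fun r => -(σ * (r ^ (σ - 1) * y (t - r)))) (Set.Ioi 0) :=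
    (I1.const_mul σ).neg
  -- the function for IBP
  set G : ℝ → ℝ := fun r => -(r ^ σ * y (t - r)) with hG
  have hGd : ∀ r ∈ Set.Ioi (0:ℝ), HasDerivAt G
      (-(σ * (r ^ (σ - 1) * y (t - r))) + r ^ σ * deriv y (t - r)) r := by
    intro r hr
    have h1 : HasDerivAt (fun r : ℝ => r ^ σ) (σ * r ^ (σ - 1)) r :=
      Real.hasDerivAt_rpow_const (Or.inl (ne_of_gt hr))
    have h2 : HasDerivAt (fun r : ℝ => y (t - r)) (deriv y (t - r) * (-1)) r := by
      have houter : HasDerivAt y (deriv y (t - r)) (t - r) :=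
        (hy.differentiable (by simp) (t - r)).hasDerivAt
      have hinner : HasDerivAt (fun r : ℝ => t - r) (-1) r := (hasDerivAt_id r).const_sub t
      exact houter.comp r hinner
    have h3 : HasDerivAt G (-(σ * r ^ (σ - 1) * y (t - r) + r ^ σ * (deriv y (t - r) * -1))) r :=
      (h1.mul h2).neg
    convert h3 using 1
    ring
  have hGcont : ContinuousWithinAt G (Set.Ici 0) 0 := by
    apply ContinuousAt.continuousWithinAt
    apply ContinuousAt.neg
    exact ((Real.continuousAt_rpow_const 0 σ (Or.inr hσ.le)).mul
      ((hyc.comp (continuous_const.sub continuous_id)).continuousAt))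
  have hGtop : Filter.Tendsto G Filter.atTop (nhds 0) := by
    have hev : ∀ᶠ r in Filter.atTop, G r = 0 := by
      filter_upwards [Filter.eventually_ge_atTop (t + |R|)] with r hr
      have hy0 : y (t - r) = 0 := by
        apply hyzero
        rw [abs_sub_comm]
        calc |R| ≤ r - t := by linarith
        _ ≤ |r - t| := le_abs_self _
      simp [hG, hy0]
    exact Filter.Tendsto.congr' (Filter.EventuallyEq.symm hev) tendsto_const_nhds
  have f'int : IntegrableOn
      (fun r => -(σ * (r ^ (σ - 1) * y (t - r))) + r ^ σ * deriv y (t - r)) (Set.Ioi 0) :=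
    A'.add I2
  have key := integral_Ioi_of_hasDerivAt_of_tendsto hGcont hGd f'int hGtop
  have hG0 : G 0 = 0 := by
    simp [hG, Real.zero_rpow (ne_of_gt hσ)]
  rw [hG0, sub_zero] at key
  rw [integral_add A' I2] at key
  have hA : ∫ r in Set.Ioi 0, -(σ * (r ^ (σ - 1) * y (t - r)))
      = -(σ * ∫ r in Set.Ioi 0, r ^ (σ - 1) * y (t - r)) := by
    rw [integral_neg, integral_const_mul]
  rw [hA] at key
  have e1 : (kk (σ + 1) ⊛ deriv y) t = ∫ r in Set.Ioi 0, r ^ σ * deriv y (t - r) := by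
    rw [conv_to_Ioi]
    congr 1
    funext r
    rw [add_sub_cancel_right]
  have e2 : (kk σ ⊛ y) t = ∫ r in Set.Ioi 0, r ^ (σ - 1) * y (t - r) := conv_to_Ioi y t
  rw [e1, e2]
  linarith [key]
lemma Dl_eq_gen (γ : ℝ) (hγ : 0 < γ) {x : ℝ → ℝ} (hx : ContDiff ℝ (⊤:ℕ∞) x)
    (hcx : HasCompactSupport x) (m : ℕ) (hm : γ < m) (t : ℝ) :
    Dl γ x t = (Real.Gamma ((m:ℝ) - γ))⁻¹ * (kk ((m:ℝ) - γ) ⊛ iteratedDeriv m x) t := by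
  have hbase : ⌊γ⌋₊ + 1 ≤ m := (Nat.floor_lt hγ.le).2 hm
  clear hm
  induction m, hbase using Nat.le_induction with
  | base =>
    rw [Dl_eq γ hx hcx t]
    norm_num
  | succ m hm' ih =>
    have hγm : γ < m := by
      have h1 : γ < (⌊γ⌋₊ : ℝ) + 1 := Nat.lt_floor_add_one γ
      have h2 : ((⌊γ⌋₊ + 1 : ℕ) : ℝ) ≤ m := by exact_mod_cast hm'
      push_cast at h2
      linarith
    have hσ : 0 < (m:ℝ) - γ := by linarith
    rw [ih]
    have e : ((m + 1 : ℕ) : ℝ) - γ = ((m:ℝ) - γ) + 1 := by push_cast; ring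
    rw [e, iteratedDeriv_succ,
      conv_step hσ (smooth_cs_itd hx hcx m).1 (smooth_cs_itd hx hcx m).2 t,
      Real.Gamma_add_one (ne_of_gt hσ)]
    have hΓ : Real.Gamma ((m:ℝ) - γ) ≠ 0 := (Real.Gamma_pos_of_pos hσ).ne'
    field_simp
lemma kk_mul_kk_eq_indicator (σ₁ σ₂ : ℝ) (w : ℝ) :
    (fun s => kk σ₁ s * kk σ₂ (w - s))
      = (Set.Ioo 0 w).indicator (fun s => s ^ (σ₁ - 1) * (w - s) ^ (σ₂ - 1)) := by
  funext s
  by_cases h1 : 0 < s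
  · by_cases h2 : s < w
    · rw [kk_pos h1, kk_pos (by linarith : (0:ℝ) < w - s),
        Set.indicator_of_mem (show s ∈ Set.Ioo 0 w from ⟨h1, h2⟩)]
    · rw [kk_zero (by linarith [not_lt.1 h2] : w - s ≤ 0), mul_zero,
        Set.indicator_of_notMem (fun hs => h2 hs.2)]
  · rw [kk_zero (not_lt.1 h1), zero_mul,
      Set.indicator_of_notMem (fun hs => h1 hs.1)]

lemma beta_intervalIntegrable {σ₁ σ₂ : ℝ} (h₁ : 0 < σ₁) (h₂ : 0 < σ₂) {w : ℝ} (hw : 0 < w) :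
    IntervalIntegrable (fun s => s ^ (σ₁ - 1) * (w - s) ^ (σ₂ - 1)) volume 0 w := by
  have Ia : IntervalIntegrable (fun s => s ^ (σ₁ - 1) * (w - s) ^ (σ₂ - 1)) volume 0 (w/2) := by
    apply IntervalIntegrable.mul_continuousOn
    · exact intervalIntegral.intervalIntegrable_rpow' (by linarith)
    · intro s hs
      rw [Set.uIcc_of_le (by linarith : (0:ℝ) ≤ w/2)] at hs
      have hws : 0 < w - s := by
        have := hs.2; linarith
      exact ((Real.continuousAt_rpow_const (w - s) (σ₂ - 1) (Or.inl hws.ne')).comp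
        ((continuous_const.sub continuous_id).continuousAt)).continuousWithinAt
  have Ib : IntervalIntegrable (fun s => s ^ (σ₁ - 1) * (w - s) ^ (σ₂ - 1)) volume (w/2) w := by
    apply IntervalIntegrable.continuousOn_mul
    · have base : IntervalIntegrable (fun x : ℝ => x ^ (σ₂ - 1)) volume (w/2) 0 :=
        intervalIntegral.intervalIntegrable_rpow' (by linarith)
      have := base.comp_sub_left w
      have hww : w - w/2 = w/2 := by ring
      rw [hww] at this
      simpa using this
    · intro s hs
      rw [Set.uIcc_of_le (by linarith : w/2 ≤ w)] at hs
      have hs0 : 0 < s := by have := hs.1; linarith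
      exact (Real.continuousAt_rpow_const s (σ₁ - 1) (Or.inl hs0.ne')).continuousWithinAt
  exact Ia.trans Ib

lemma kk_mul_kk_integrable {σ₁ σ₂ : ℝ} (h₁ : 0 < σ₁) (h₂ : 0 < σ₂) (w : ℝ) :
    Integrable (fun s => kk σ₁ s * kk σ₂ (w - s)) volume := by
  rw [kk_mul_kk_eq_indicator]
  rw [integrable_indicator_iff measurableSet_Ioo]
  rcases le_or_gt w 0 with hw | hw
  · rw [Set.Ioo_eq_empty (by linarith)]
    exact integrableOn_empty
  · exact (intervalIntegrable_iff_integrableOn_Ioo_of_le hw.le).1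
      (beta_intervalIntegrable h₁ h₂ hw)
lemma beta_value {σ₁ σ₂ : ℝ} (h₁ : 0 < σ₁) (h₂ : 0 < σ₂) {w : ℝ} (hw : 0 < w) :
    ∫ s in (0:ℝ)..w, s ^ (σ₁ - 1) * (w - s) ^ (σ₂ - 1)
      = (Real.Gamma σ₁ * Real.Gamma σ₂ / Real.Gamma (σ₁ + σ₂)) * w ^ (σ₁ + σ₂ - 1) := by
  have hC := Complex.betaIntegral_scaled (σ₁ : ℂ) (σ₂ : ℂ) hw
  have hGB := Complex.Gamma_mul_Gamma_eq_betaIntegral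
    (by simpa using h₁ : 0 < Complex.re (σ₁:ℂ)) (by simpa using h₂ : 0 < Complex.re (σ₂:ℂ))
  have hΓ : (0:ℝ) < Real.Gamma (σ₁ + σ₂) := Real.Gamma_pos_of_pos (by linarith)
  have hΓC : Complex.Gamma ((σ₁:ℂ) + σ₂) ≠ 0 := by
    rw [show ((σ₁:ℂ) + σ₂) = ((σ₁ + σ₂ : ℝ) : ℂ) by push_cast; ring, Complex.Gamma_ofReal]
    exact_mod_cast hΓ.ne'
  have hbeta : Complex.betaIntegral (σ₁:ℂ) (σ₂:ℂ)
      = ((Real.Gamma σ₁ * Real.Gamma σ₂ / Real.Gamma (σ₁ + σ₂) : ℝ) : ℂ) := by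
    have hb2 : Complex.betaIntegral (σ₁:ℂ) (σ₂:ℂ)
        = Complex.Gamma (σ₁:ℂ) * Complex.Gamma (σ₂:ℂ) / Complex.Gamma ((σ₁:ℂ) + σ₂) := by
      rw [hGB, mul_comm, mul_div_assoc, div_self hΓC, mul_one]
    rw [hb2, show ((σ₁:ℂ) + σ₂) = ((σ₁ + σ₂ : ℝ) : ℂ) by push_cast; ring,
      Complex.Gamma_ofReal, Complex.Gamma_ofReal, Complex.Gamma_ofReal]
    push_cast
    ring
  -- transfer integral to ℝ
  have htrans : (∫ x : ℝ in (0:ℝ)..w, (x:ℂ) ^ ((σ₁:ℂ) - 1) * ((w:ℂ) - x) ^ ((σ₂:ℂ) - 1))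
      = ((∫ s in (0:ℝ)..w, s ^ (σ₁ - 1) * (w - s) ^ (σ₂ - 1) : ℝ) : ℂ) := by
    rw [← intervalIntegral.integral_ofReal]
    apply intervalIntegral.integral_congr
    intro x hx
    rw [Set.uIcc_of_le hw.le] at hx
    dsimp only
    have hx0 : (0:ℝ) ≤ x := hx.1
    have hwx : (0:ℝ) ≤ w - x := by linarith [hx.2]
    rw [show ((σ₁:ℂ) - 1) = ((σ₁ - 1 : ℝ) : ℂ) by push_cast; ring,
      show ((σ₂:ℂ) - 1) = ((σ₂ - 1 : ℝ) : ℂ) by push_cast; ring,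
      show ((w:ℂ) - (x:ℂ)) = ((w - x : ℝ) : ℂ) by push_cast; ring,
      ← Complex.ofReal_cpow hx0, ← Complex.ofReal_cpow hwx, ← Complex.ofReal_mul]
  rw [htrans, hbeta] at hC
  have hrhs : ((w:ℂ)) ^ ((σ₁:ℂ) + σ₂ - 1) = ((w ^ (σ₁ + σ₂ - 1) : ℝ) : ℂ) := by
    rw [show ((σ₁:ℂ) + σ₂ - 1) = ((σ₁ + σ₂ - 1 : ℝ) : ℂ) by push_cast; ring,
      ← Complex.ofReal_cpow hw.le]
  rw [hrhs, ← Complex.ofReal_mul, Complex.ofReal_inj] at hC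
  rw [hC]
  ring

lemma kk_conv_kk {σ₁ σ₂ : ℝ} (h₁ : 0 < σ₁) (h₂ : 0 < σ₂) (w : ℝ) :
    (kk σ₁ ⊛ kk σ₂) w
      = (Real.Gamma σ₁ * Real.Gamma σ₂ / Real.Gamma (σ₁ + σ₂)) * kk (σ₁ + σ₂) w := by
  rw [convolution_def]
  simp only [ContinuousLinearMap.mul_apply']
  rcases le_or_gt w 0 with hw | hw
  · rw [kk_zero hw, mul_zero]
    rw [kk_mul_kk_eq_indicator, Set.Ioo_eq_empty (by linarith)]
    simp
  · rw [kk_pos hw, kk_mul_kk_eq_indicator,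
      integral_indicator measurableSet_Ioo, ← integral_Ioc_eq_integral_Ioo,
      ← intervalIntegral.integral_of_le hw.le, beta_value h₁ h₂ hw]
lemma conv_assoc_kk {σ₁ σ₂ : ℝ} (h₁ : 0 < σ₁) (h₂ : 0 < σ₂) {g : ℝ → ℝ}
    (hg : Continuous g) (hcg : HasCompactSupport g) (t : ℝ) :
    ((kk σ₁ ⊛ kk σ₂) ⊛ g) t = (kk σ₁ ⊛ (kk σ₂ ⊛ g)) t := by
  -- vanishing of g outside a ball
  obtain ⟨R, hR⟩ := hcg.isBounded.subset_ball 0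
  have hgz : ∀ u : ℝ, |R| ≤ |u| → g u = 0 := by
    intro u hu
    apply image_eq_zero_of_notMem_tsupport
    intro hmem
    have := hR hmem
    rw [Metric.mem_ball, dist_zero_right, Real.norm_eq_abs] at this
    have : |u| < |R| := lt_of_lt_of_le this (le_abs_self R)
    linarith
  -- the convolution kk σ₂ ⊛ ‖g‖ and its properties
  set h : ℝ → ℝ := (kk σ₂ ⊛ fun x => ‖g x‖) with hh
  have hcont : Continuous h :=
    HasCompactSupport.continuous_convolution_right _ hcg.norm (kk_locInt h₂) hg.norm
  have hh0 : ∀ w : ℝ, w ≤ -|R| → h w = 0 := by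
    intro w hw
    rw [hh, convolution_def]
    apply integral_eq_zero_of_ae
    filter_upwards with s
    show (ContinuousLinearMap.mul ℝ ℝ) (kk σ₂ s) ‖g (w - s)‖ = 0
    rw [ContinuousLinearMap.mul_apply']
    by_cases hs : 0 < s
    · have : g (w - s) = 0 := by
        apply hgz
        rw [abs_sub_comm]
        calc |R| ≤ s - w := by linarith [neg_abs_le R]
        _ ≤ |s - w| := le_abs_self _
      rw [this, norm_zero, mul_zero]
    · rw [kk_zero (not_lt.1 hs), zero_mul]
  -- bound for h on a compact interval
  set M : ℝ := |t| + |R| + 1 with hM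
  obtain ⟨C, hC⟩ := (isCompact_Icc (a := -M) (b := M)).exists_bound_of_continuousOn
    hcont.continuousOn
  have hM0 : 0 < M := by positivity
  have hC0 : 0 ≤ C := le_trans (norm_nonneg (h 0)) (hC 0 ⟨by linarith, by linarith⟩)
  -- the dominating function
  set φ : ℝ → ℝ := (Set.Ioo 0 (t + |R|)).indicator (fun s => C * kk σ₁ s) with hφ
  have φint : Integrable φ volume := by
    rw [hφ, integrable_indicator_iff measurableSet_Ioo]
    exact (((kk_locInt h₁).integrableOn_isCompact isCompact_Icc).mono_set
      Set.Ioo_subset_Icc_self).const_mul C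
  -- the main integrability fact
  have hfgk : Integrable (fun s => kk σ₁ s * h (t - s)) volume := by
    apply Integrable.mono' φint
    · exact (kk_meas σ₁).aestronglyMeasurable.mul
        ((hcont.comp (continuous_const.sub continuous_id)).aestronglyMeasurable)
    · filter_upwards with s
      by_cases hs1 : 0 < s
      · by_cases hs2 : s < t + |R|
        · rw [hφ, Set.indicator_of_mem (show s ∈ Set.Ioo 0 (t + |R|) from ⟨hs1, hs2⟩)]
          rw [norm_mul, Real.norm_of_nonneg (kk_nonneg σ₁ s), mul_comm C (kk σ₁ s)]
          apply mul_le_mul_of_nonneg_left _ (kk_nonneg σ₁ s)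
          apply hC
          constructor
          · have : -|R| ≤ t - s := by linarith
            have h2 : -M ≤ -|R| := by rw [hM]; linarith [abs_nonneg t]
            linarith
          · have : t - s ≤ t := by linarith
            have h2 : t ≤ |t| := le_abs_self t
            rw [hM]; linarith [abs_nonneg R]
        · have : h (t - s) = 0 := hh0 _ (by linarith [not_lt.1 hs2])
          rw [this, mul_zero, norm_zero, hφ,
            Set.indicator_of_notMem (fun hs => hs2 hs.2)]
      · rw [kk_zero (not_lt.1 hs1), zero_mul, norm_zero, hφ,
          Set.indicator_of_notMem (fun hs => hs1 hs.1)]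
  -- apply associativity
  apply convolution_assoc (ContinuousLinearMap.mul ℝ ℝ) (ContinuousLinearMap.mul ℝ ℝ)
    (ContinuousLinearMap.mul ℝ ℝ) (ContinuousLinearMap.mul ℝ ℝ)
    (fun x y z => by simp only [ContinuousLinearMap.mul_apply']; ring)
    ((kk_meas σ₁).aestronglyMeasurable) ((kk_meas σ₂).aestronglyMeasurable)
    hg.aestronglyMeasurable
  · exact Filter.Eventually.of_forall fun y => kk_mul_kk_integrable h₁ h₂ y
  · apply Filter.Eventually.of_forall
    intro y
    rw [kk_norm σ₂]
    exact HasCompactSupport.convolutionExists_right _ hcg.norm (kk_locInt h₂) hg.norm y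
  · rw [kk_norm σ₁, kk_norm σ₂]
    exact hfgk
lemma Dl_Dl (γ : ℝ) (hγ : 0 < γ) {x : ℝ → ℝ} (hx : ContDiff ℝ (⊤:ℕ∞) x)
    (hcx : HasCompactSupport x) (t : ℝ) :
    Dl γ (Dl γ x) t = Dl (2 * γ) x t := by
  set σ : ℝ := (⌊γ⌋₊ : ℝ) + 1 - γ with hσdef
  have hσ : 0 < σ := sigma_pos γ
  set n : ℕ := ⌊γ⌋₊ + 1 with hn
  have hg := smooth_cs_itd hx hcx n
  set g : ℝ → ℝ := iteratedDeriv n x with hgdef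
  have hΓpos := Real.Gamma_pos_of_pos hσ
  have hΓ : Real.Gamma σ ≠ 0 := hΓpos.ne'
  have hΓ2 : Real.Gamma (σ + σ) ≠ 0 := (Real.Gamma_pos_of_pos (by linarith)).ne'
  set B : ℝ := Real.Gamma σ * Real.Gamma σ / Real.Gamma (σ + σ) with hB
  have hconv_smooth : ContDiff ℝ (⊤:ℕ∞) (kk (σ+σ) ⊛ g) :=
    HasCompactSupport.contDiff_convolution_right _ hg.2 (kk_locInt (by linarith)) hg.1
  have hfeq : Dl γ x = fun s => (Real.Gamma σ)⁻¹ * (kk σ ⊛ g) s :=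
    funext fun s => Dl_eq γ hx hcx s
  have inner : (fun τ => ∫ s in Set.Iic τ, (τ - s) ^ ((⌊γ⌋₊ : ℝ) - γ) * Dl γ x s)
      = fun τ => ((Real.Gamma σ)⁻¹ * B) * (kk (σ+σ) ⊛ g) τ := by
    funext τ
    rw [hfeq]
    dsimp only
    have hexp : (⌊γ⌋₊ : ℝ) - γ = σ - 1 := by rw [hσdef]; ring
    rw [hexp]
    have e1 : ∀ s : ℝ, (τ - s) ^ (σ - 1) * ((Real.Gamma σ)⁻¹ * (kk σ ⊛ g) s)
        = (Real.Gamma σ)⁻¹ * ((τ - s) ^ (σ - 1) * (kk σ ⊛ g) s) := fun s => by ring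
    simp_rw [e1]
    rw [integral_const_mul, ← conv_apply_eq σ (kk σ ⊛ g) τ,
      ← conv_assoc_kk hσ hσ hg.1.continuous hg.2 τ]
    have e2 : (kk σ ⊛ kk σ) = fun w => B * kk (σ+σ) w := funext fun w => kk_conv_kk hσ hσ w
    rw [e2]
    have e3 : ((fun w => B * kk (σ+σ) w) ⊛ g) τ = B * (kk (σ+σ) ⊛ g) τ := by
      rw [convolution_def, convolution_def]
      simp only [ContinuousLinearMap.mul_apply']
      rw [← integral_const_mul]
      congr 1
      funext s
      ring
    rw [e3]
    ring
  have lhs_eq : Dl γ (Dl γ x) t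
      = (Real.Gamma σ)⁻¹ * iteratedDeriv n
          (fun τ => ∫ s in Set.Iic τ, (τ - s) ^ ((⌊γ⌋₊ : ℝ) - γ) * Dl γ x s) t := rfl
  rw [lhs_eq, inner, itd_const_mul _ hconv_smooth n,
    conv_itd (show (0:ℝ) < σ + σ by linarith) n g hg.1 hg.2, hgdef, itd_itd n n x]
  have h2γ : (0:ℝ) < 2 * γ := by linarith
  have hγn : γ < ((n:ℕ):ℝ) := by rw [hn]; push_cast; exact Nat.lt_floor_add_one γ
  rw [Dl_eq_gen (2*γ) h2γ hx hcx (n + n) (by push_cast at hγn ⊢; linarith) t]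
  have hcast : ((n + n : ℕ) : ℝ) - 2*γ = σ + σ := by rw [hσdef, hn]; push_cast; ring
  rw [hcast, hB]
  field_simp

theorem stmt18 (ρ T α : ℝ) (hρ : 0 < ρ) (hT : 0 < T) (hα : 0 < α)
    (u : ℝ → ℝ → ℝ)
    (hut : ∀ x : ℝ, ContDiff ℝ (⊤ : ℕ∞) (fun t => u t x) ∧ HasCompactSupport fun t => u t x)
    (hux : ∀ t : ℝ, Differentiable ℝ (fun y => u t y) ∧
      Differentiable ℝ (deriv fun y => u t y)) :
    (∀ t x : ℝ, Dl α (fun s => Dl α (fun τ => u τ x) s) t = Dl (2 * α) (fun τ => u τ x) t) ∧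
    ((∀ t x : ℝ, -(ρ * Dl α (fun s => Dl α (fun τ => u τ x) s) t)
        = T * deriv (deriv fun y => u t y) x)
      ↔ (∀ t x : ℝ, -(ρ * Dl (2 * α) (fun τ => u τ x) t)
          = T * deriv (deriv fun y => u t y) x)) := by
  have key : ∀ t x : ℝ, Dl α (fun s => Dl α (fun τ => u τ x) s) t
      = Dl (2 * α) (fun τ => u τ x) t := by
    intro t x
    exact Dl_Dl α hα ((hut x).1.of_le (by simp)) (hut x).2 t
  refine ⟨key, ?_, ?_⟩
  · intro H t x
    rw [← key t x]
    exact H t x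
  · intro H t x
    rw [key t x]
    exact H t x
end
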